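/- arXiv:1807.04400 — 3 statements merged into one kernel-verified Lean document; each statement's English description precedes it below -/
import Mathlib

section
/- There exists a constant C > 0 such that for all integers N ≥ 2, R ≥ 2, and every window length K with 1 ≤ K ≤ N, there exists a 2-pass streaming algorithm with state space Q satisfying log₂|Q| ≤ C·√N·(log₂ R + log₂ N) that solves the sliding-window minimum problem with parameters (N, K, R). -/
/-- Run one pass of a streaming step function over the input, returning the final
state and the concatenation (in order of emission) of the emitted lists. -/
def runPass {Q I O : Type} (f : Q → I → Q × List O) : Q → List I → Q × List O
  | q, [] => (q, [])
  | q, x :: xs =>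
    let r := f q x
    let rest := runPass f r.1 xs
    (rest.1, r.2 ++ rest.2)

/-- A `p`-pass streaming algorithm with state space `Q`, input elements `I` and
output elements `O`: an initial state and one step function per pass. -/
structure StreamAlg (Q : Type) (p : ℕ) (I O : Type) where
  init : Q
  step : Fin p → Q → I → Q × List O

/-- The list of per-pass output lists on a given input (state carried over between
passes). -/
def StreamAlg.passOutputs {Q : Type} {p : ℕ} {I O : Type} (alg : StreamAlg Q p I O)
    (input : List I) : List (List O) :=
  ((List.finRange p).foldl (fun acc r =>
    let res := runPass (alg.step r) acc.1 input
    (res.1, acc.2 ++ [res.2])) (alg.init, ([] : List (List O)))).2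

/-- The total output of the algorithm: the concatenation, in order of emission, of
all emitted lists. -/
def StreamAlg.output {Q : Type} {p : ℕ} {I O : Type} (alg : StreamAlg Q p I O)
    (input : List I) : List O :=
  (alg.passOutputs input).flatten

/-- `lowL L K i` is the minimum of the window `L_i, …, L_{i+K-1}`. -/
noncomputable def lowL (L : List ℕ) (K i : ℕ) : ℕ :=
  sInf ((fun t => L.getD t 0) '' Set.Icc i (i + K - 1))

/-- The algorithm solves the sliding-window minimum problem with parameters
`(N, K, R)`. -/
def SolvesMin {Q : Type} {p : ℕ} (alg : StreamAlg Q p ℕ ℕ) (N K R : ℕ) : Prop :=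
  ∀ L : List ℕ, L.length = N → (∀ x ∈ L, x ≤ R) →
    alg.output L = List.ofFn (fun i : Fin (N - K + 1) => lowL L K i)

namespace SWM
open List

noncomputable section
attribute [local instance] Classical.propDecidable

/-- value of the stream at position `j` (0 beyond the end). -/
def Ad (L : List ℕ) (j : ℕ) : ℕ := L.getD j 0

/-- minimum of the stream over positions `[a,b]`. -/
def mr (L : List ℕ) (a b : ℕ) : ℕ := sInf ((fun t => L.getD t 0) '' Set.Icc a b)

section mrlemmas
variable {L : List ℕ} {a b x v R : ℕ}

lemma mr_le (h1 : a ≤ x) (h2 : x ≤ b) : mr L a b ≤ Ad L x :=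
  Nat.sInf_le ⟨x, ⟨h1, h2⟩, rfl⟩

lemma le_mr (hab : a ≤ b) (h : ∀ x, a ≤ x → x ≤ b → v ≤ Ad L x) : v ≤ mr L a b := by
  have hne : ((fun t => L.getD t 0) '' Set.Icc a b).Nonempty :=
    ⟨Ad L a, a, ⟨le_refl a, hab⟩, rfl⟩
  apply le_csInf hne
  rintro w ⟨x, ⟨h1, h2⟩, rfl⟩; exact h x h1 h2

lemma mr_mono {a' b' : ℕ} (h1 : a ≤ a') (h2 : a' ≤ b') (h3 : b' ≤ b) :
    mr L a b ≤ mr L a' b' :=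
  le_mr h2 (fun x hx1 hx2 => mr_le (le_trans h1 hx1) (le_trans hx2 h3))

lemma mr_split {c : ℕ} (h1 : a ≤ c) (h2 : c < b) :
    mr L a b = min (mr L a c) (mr L (c+1) b) := by
  apply _root_.le_antisymm
  · exact le_min (mr_mono (le_refl a) h1 (le_of_lt h2)) (mr_mono (by omega) (by omega) (le_refl b))
  · apply le_mr (by omega)
    intro x hx1 hx2
    rcases le_or_gt x c with h | h
    · exact le_trans (min_le_left _ _) (mr_le hx1 h)
    · exact le_trans (min_le_right _ _) (mr_le (by omega) hx2)

lemma mr_leR (hab : a ≤ b) (hR : ∀ j, Ad L j ≤ R) : mr L a b ≤ R :=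
  le_trans (mr_le (le_refl a) hab) (hR a)

lemma mr_single : mr L a a = Ad L a := by
  apply _root_.le_antisymm (mr_le (le_refl a) (le_refl a))
  apply le_mr (le_refl a)
  intro x h1 h2
  have hx : x = a := Nat.le_antisymm h2 h1
  rw [hx]

lemma mr_congr {f : ℕ → ℕ} (hab : a ≤ b) (h : ∀ x, a ≤ x → x ≤ b → f x = Ad L x) :
    sInf (f '' Set.Icc a b) = mr L a b := by
  unfold mr
  congr 1
  apply Set.image_congr
  rintro x ⟨h1, h2⟩
  exact h x h1 h2
end mrlemmas

/-! ### parameters -/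

/-- block size -/
def Bk (N : ℕ) : ℕ := Nat.sqrt N + 1
/-- number of block slots -/
def nB (N : ℕ) : ℕ := N / Bk N + 1

lemma Bk_pos (N : ℕ) : 0 < Bk N := Nat.succ_pos _

section semantics
variable (N K R : ℕ) (L : List ℕ)

/-- semantic block minimum (block truncated at `N`). -/
def muT (x : ℕ) : ℕ := mr L (x * Bk N) (min (x * Bk N + Bk N) N - 1)

/-- minimum over all semantic block minima of full blocks contained in
`(end of block of e, e+K-1]`, with sentinel `R+1`. -/
def Phi (e : ℕ) : ℕ :=
  sInf (insert (R+1) {v | ∃ x, e / Bk N < x ∧ x * Bk N + Bk N ≤ e + K ∧ v = muT N L x})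

/-- the desired output -/
def low (e : ℕ) : ℕ := mr L e (e + K - 1)

/-- the compressed pending value -/
def FF (t e : ℕ) : ℕ := min (mr L e t) (Phi N K R L e)

end semantics

/-- end of the block containing `e` -/
def cEnd (N e : ℕ) : ℕ := e / Bk N * Bk N + Bk N - 1

/-! ### the state -/

structure St (N R : ℕ) where
  pos : Fin (2*N+2)
  e0 : Fin (N+2)
  acc : Fin (R+2)
  mu : Fin (nB N) → Fin (R+1)
  raw : Fin (Bk N) → Fin (R+1)
  s1i : Fin (nB N + 1)
  s1a : Fin (Bk N) → Fin (R+1)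
  s2i : Fin (nB N + 1)
  s2a : Fin (Bk N) → Fin (R+1)

def stEquiv (N R : ℕ) : St N R ≃
    (Fin (2*N+2) × Fin (N+2) × Fin (R+2) × (Fin (nB N) → Fin (R+1)) ×
     (Fin (Bk N) → Fin (R+1)) × Fin (nB N + 1) × (Fin (Bk N) → Fin (R+1)) ×
     Fin (nB N + 1) × (Fin (Bk N) → Fin (R+1))) where
  toFun s := (s.pos, s.e0, s.acc, s.mu, s.raw, s.s1i, s.s1a, s.s2i, s.s2a)
  invFun p := ⟨p.1, p.2.1, p.2.2.1, p.2.2.2.1, p.2.2.2.2.1, p.2.2.2.2.2.1,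
    p.2.2.2.2.2.2.1, p.2.2.2.2.2.2.2.1, p.2.2.2.2.2.2.2.2⟩
  left_inv s := rfl
  right_inv p := rfl

instance (N R : ℕ) : Fintype (St N R) := Fintype.ofEquiv _ (stEquiv N R).symm

section machine
variable (N K R : ℕ)

def bmod (j : ℕ) : Fin (Bk N) := ⟨j % Bk N, Nat.mod_lt _ (Bk_pos N)⟩

variable {N R} in
def dmu (q : St N R) (x : ℕ) : ℕ := if h : x < nB N then (q.mu ⟨x, h⟩).1 else 0
variable {N R} in
def rawAt (q : St N R) (j : ℕ) : ℕ := (q.raw (bmod N j)).1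
variable {N R} in
def s1At (q : St N R) (j : ℕ) : ℕ := (q.s1a (bmod N j)).1
variable {N R} in
def s2At (q : St N R) (j : ℕ) : ℕ := (q.s2a (bmod N j)).1

def rmin (q : St N R) (a b : ℕ) : ℕ := sInf (rawAt q '' Set.Icc a b)
def s1min (q : St N R) (a b : ℕ) : ℕ := sInf (s1At q '' Set.Icc a b)
def s2min (q : St N R) (a b : ℕ) : ℕ := sInf (s2At q '' Set.Icc a b)

def PhiM (q : St N R) (e : ℕ) : ℕ :=
  sInf (insert (R+1) {v | ∃ x, e / Bk N < x ∧ x * Bk N + Bk N ≤ e + K ∧ v = dmu q x})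

def ownv (q : St N R) (t e : ℕ) : ℕ :=
  if q.s1i.1 = e / Bk N ∧ e / Bk N < t / Bk N then s1min N R q e (cEnd N e)
  else if q.s2i.1 = e / Bk N ∧ e / Bk N < t / Bk N then s2min N R q e (cEnd N e)
  else R + 1

def rpart (q : St N R) (t e : ℕ) : ℕ :=
  if e / Bk N = t / Bk N then rmin N R q e t else rmin N R q (Bk N * (t / Bk N)) t

def VV (q : St N R) (t e : ℕ) : ℕ :=
  min (PhiM N K R q e) (min (rpart N R q t e) (ownv N R q t e))

def CERT (q : St N R) (t e : ℕ) : Prop :=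
  VV N K R q t e ≤ dmu q (t / Bk N) ∧ VV N K R q t e ≤ dmu q ((e + K - 1) / Bk N)

def emitLoop (q : St N R) (t : ℕ) : ℕ → ℕ → ℕ × List ℕ
  | 0, e0 => (e0, [])
  | fuel+1, e0 =>
    if e0 + K ≤ N ∧ e0 ≤ t ∧ (t + 1 = e0 + K ∨ CERT N K R q t e0) then
      let r := emitLoop q t fuel (e0+1)
      (r.1, VV N K R q t e0 :: r.2)
    else (e0, [])

def clampR (a : ℕ) : Fin (R+1) := ⟨min a R, by omega⟩

def upd1 (q : St N R) (a n : ℕ) : St N R :=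
  {q with pos := ⟨min (q.pos.1+1) (2*N+1), by omega⟩,
          raw := Function.update q.raw (bmod N n) (clampR R a)}

def updE (q : St N R) (e1 : ℕ) : St N R := {q with e0 := ⟨min e1 (N+1), by omega⟩}

def updS (q : St N R) (b : ℕ) : St N R :=
  if b % 2 = 0 then {q with s1i := ⟨min b (nB N), by omega⟩, s1a := q.raw}
  else {q with s2i := ⟨min b (nB N), by omega⟩, s2a := q.raw}

def step2core (n : ℕ) (q : St N R) (a : ℕ) : St N R × List ℕ :=
  let q1 := upd1 N R q a n
  let r := emitLoop N K R q1 n (N+2) q.e0.1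
  let q2 := updE N R q1 r.1
  (if (n+1) % Bk N = 0 ∧ n / Bk N * Bk N ≤ r.1 + Bk N then updS N R q2 (n / Bk N)
   else q2, r.2)

def step2 (q : St N R) (a : ℕ) : St N R × List ℕ := step2core N K R (q.pos.1 - N) q a

def step1core (t : ℕ) (q : St N R) (a : ℕ) : St N R × List ℕ :=
  ({q with
    pos := ⟨min (t+1) (2*N+1), by omega⟩,
    acc := if (t+1) % Bk N = 0 ∨ t+1 = N then ⟨R+1, by omega⟩
      else ⟨min (min (q.acc.1) a) R, by omega⟩,
    mu := if (t+1) % Bk N = 0 ∨ t+1 = N then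
        (if h : t / Bk N < nB N then
          Function.update q.mu ⟨t / Bk N, h⟩ ⟨min (min (q.acc.1) a) R, by omega⟩
        else q.mu)
      else q.mu}, [])

def step1 (q : St N R) (a : ℕ) : St N R × List ℕ := step1core N R (q.pos.1) q a

def init0 : St N R :=
  ⟨⟨0, by omega⟩, ⟨0, by omega⟩, ⟨R+1, by omega⟩, fun _ => ⟨0, by omega⟩,
   fun _ => ⟨0, by omega⟩, ⟨nB N, by omega⟩, fun _ => ⟨0, by omega⟩,
   ⟨nB N, by omega⟩, fun _ => ⟨0, by omega⟩⟩

def theAlg : StreamAlg (St N R) 2 ℕ ℕ :=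
  ⟨init0 N R, fun p q a => if p.1 = 0 then step1 N R q a else step2 N K R q a⟩

end machine

/-! ### invariants -/

section invariants
variable (N K R : ℕ) (L : List ℕ)

structure Inv2 (n : ℕ) (q : St N R) : Prop where
  pos : q.pos.1 = N + n
  e0n : q.e0.1 ≤ n
  e0M : q.e0.1 + K ≤ N + 1
  e0K : n + 1 ≤ q.e0.1 + K
  mu : ∀ x, x * Bk N < N → dmu q x = muT N L x
  raw : ∀ j, j < n → Bk N * ((n-1) / Bk N) ≤ j → rawAt q j = Ad L j
  s1c : q.s1i.1 < nB N → q.s1i.1 % 2 = 0 ∧ q.s1i.1 * Bk N + Bk N ≤ n ∧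
    (∀ j, q.s1i.1 * Bk N ≤ j → j < q.s1i.1 * Bk N + Bk N → s1At q j = Ad L j)
  s2c : q.s2i.1 < nB N → q.s2i.1 % 2 = 1 ∧ q.s2i.1 * Bk N + Bk N ≤ n ∧
    (∀ j, q.s2i.1 * Bk N ≤ j → j < q.s2i.1 * Bk N + Bk N → s2At q j = Ad L j)
  j2 : ∀ e, q.e0.1 ≤ e → e + K ≤ N → e / Bk N < n / Bk N →
    q.s1i.1 ≠ e / Bk N → q.s2i.1 ≠ e / Bk N →
    Phi N K R L e ≤ mr L e (cEnd N e)

end invariants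

/-! ### block arithmetic helpers -/

section blkarith
variable {N : ℕ}

lemma bk0 (x : ℕ) : Bk N * (x / Bk N) ≤ x := by
  rw [mul_comm]; exact Nat.div_mul_le_self x (Bk N)

lemma bk1 (x : ℕ) : x < Bk N * (x / Bk N) + Bk N := by
  have h1 := Nat.div_add_mod x (Bk N)
  have h2 := Nat.mod_lt x (Bk_pos N)
  omega

lemma bk2 {x y : ℕ} (h : x / Bk N < y / Bk N) : x / Bk N * Bk N + Bk N ≤ y := by
  have h1 : (x / Bk N + 1) * Bk N ≤ (y / Bk N) * Bk N := Nat.mul_le_mul_right _ h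
  have h2 := Nat.div_mul_le_self y (Bk N)
  nlinarith

lemma bk3 {x y : ℕ} (h : x ≤ y) : x / Bk N ≤ y / Bk N := Nat.div_le_div_right h

lemma bk4 {x z : ℕ} (h1 : Bk N * (x / Bk N) ≤ z) (h2 : z ≤ x) : z / Bk N = x / Bk N := by
  apply Nat.le_antisymm (Nat.div_le_div_right h2)
  rw [Nat.le_div_iff_mul_le (Bk_pos N)]
  rw [mul_comm] at h1
  exact h1

lemma bk5 {t : ℕ} (h : (t+1) % Bk N = 0) : t / Bk N * Bk N + Bk N = t + 1 := by
  have hB := Bk_pos N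
  obtain ⟨c, hc⟩ := Nat.dvd_of_mod_eq_zero h
  have hc0 : c ≠ 0 := by rintro rfl; omega
  obtain ⟨d, rfl⟩ : ∃ d, c = d + 1 := ⟨c - 1, by omega⟩
  have hm : t + 1 = Bk N * d + Bk N := by rw [hc]; ring
  have hdiv : t / Bk N = d := by
    apply Nat.div_eq_of_lt_le
    · have : d * Bk N = Bk N * d := by ring
      omega
    · have : (d+1) * Bk N = Bk N * d + Bk N := by ring
      omega
  rw [hdiv]
  have : d * Bk N = Bk N * d := by ring
  omega

end blkarith

/-! ### semantic lemmas -/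

section semlemmas
variable {N K R : ℕ} {L : List ℕ}

lemma Phi_le_top (e : ℕ) : Phi N K R L e ≤ R + 1 := Nat.sInf_le (Set.mem_insert _ _)

lemma Phi_le_mu {e x : ℕ} (h1 : e / Bk N < x) (h2 : x * Bk N + Bk N ≤ e + K) :
    Phi N K R L e ≤ muT N L x :=
  Nat.sInf_le (Set.mem_insert_of_mem _ ⟨x, h1, h2, rfl⟩)

lemma le_Phi {v e : ℕ} (h0 : v ≤ R + 1)
    (h : ∀ x, e / Bk N < x → x * Bk N + Bk N ≤ e + K → v ≤ muT N L x) :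
    v ≤ Phi N K R L e := by
  apply le_csInf ⟨R+1, Set.mem_insert _ _⟩
  rintro w (rfl | ⟨x, h1, h2, rfl⟩)
  · exact h0
  · exact h x h1 h2

lemma low_le_Phi (hK : 1 ≤ K) {e : ℕ} (he : e + K ≤ N) (hA : ∀ j, Ad L j ≤ R) :
    low K L e ≤ Phi N K R L e := by
  apply le_Phi
  · exact le_trans (mr_leR (by omega) hA) (by omega)
  · intro x h1 h2
    have hfull : min (x * Bk N + Bk N) N = x * Bk N + Bk N := by omega
    unfold muT
    rw [hfull]
    have hlo : e < x * Bk N := by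
      have h3 := bk2 (N := N) (show e / Bk N < (x * Bk N) / Bk N by
        rw [Nat.mul_div_cancel _ (Bk_pos N)]; exact h1)
      have h4 := bk1 (N := N) e
      have h5 : Bk N * (e / Bk N) = e / Bk N * Bk N := by ring
      omega
    exact mr_mono (by omega) (by have := Bk_pos N; omega) (by have := Bk_pos N; omega)

lemma A_ge_muT {x : ℕ} (hx : x < N) : muT N L (x / Bk N) ≤ Ad L x := by
  unfold muT
  apply mr_le
  · rw [mul_comm]; exact bk0 x
  · have h1 := bk1 (N := N) x
    have h2 := Bk_pos N
    have h3 : Bk N * (x / Bk N) = x / Bk N * Bk N := by ring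
    omega

lemma low_le_FF (hK : 1 ≤ K) {t e : ℕ} (he : e + K ≤ N) (het : e ≤ t)
    (hte : t + 1 ≤ e + K) (hA : ∀ j, Ad L j ≤ R) :
    low K L e ≤ FF N K R L t e :=
  le_min (mr_mono le_rfl het (by omega)) (low_le_Phi hK he hA)

lemma frontier_sound (hK : 1 ≤ K) {e : ℕ} (he : e + K ≤ N) (hA : ∀ j, Ad L j ≤ R) :
    low K L e = FF N K R L (e + K - 1) e := by
  unfold FF low
  have h := low_le_Phi (L := L) hK he hA
  unfold low at h
  omega

lemma cert_sound (hK : 1 ≤ K) {t e : ℕ} (he : e + K ≤ N) (het : e ≤ t)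
    (hte : t + 1 ≤ e + K) (hA : ∀ j, Ad L j ≤ R)
    (h1 : FF N K R L t e ≤ muT N L (t / Bk N))
    (h2 : FF N K R L t e ≤ muT N L ((e + K - 1) / Bk N)) :
    low K L e = FF N K R L t e := by
  apply _root_.le_antisymm (low_le_FF hK he het hte hA)
  apply le_mr (by omega)
  intro x hx1 hx2
  rcases le_or_gt x t with hxt | hxt
  · exact le_trans (min_le_left _ _) (mr_le hx1 hxt)
  · have hxN : x < N := by omega
    have hxA := A_ge_muT (L := L) hxN
    have hd1 : t / Bk N ≤ x / Bk N := bk3 (by omega)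
    have hd2 : x / Bk N ≤ (e + K - 1) / Bk N := bk3 (by omega)
    rcases eq_or_lt_of_le hd1 with hq | hq
    · rw [← hq] at hxA; exact le_trans h1 hxA
    rcases eq_or_lt_of_le hd2 with hq2 | hq2
    · rw [hq2] at hxA; exact le_trans h2 hxA
    · -- strictly-between block: covered by Phi
      have hqual1 : e / Bk N < x / Bk N := lt_of_le_of_lt (bk3 het) hq
      have hqual2 : x / Bk N * Bk N + Bk N ≤ e + K := by
        have := bk2 hq2
        omega
      have := Phi_le_mu (L := L) (K := K) (R := R) hqual1 hqual2
      exact le_trans (le_trans (min_le_right _ _) this) hxA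

lemma j2_establish (hK : 1 ≤ K) {t e0 : ℕ} (ht : (t+1) % Bk N = 0) (htN : t < N)
    (he0t : e0 ≤ t) (hfr : t + 1 ≠ e0 + K) (hKt : t + 1 ≤ e0 + K)
    (hst : e0 + Bk N < t / Bk N * Bk N)
    (hcert : muT N L ((e0 + K - 1) / Bk N) < FF N K R L t e0) :
    ∀ e, t / Bk N * Bk N ≤ e → e ≤ t → e + K ≤ N →
      Phi N K R L e ≤ mr L e (cEnd N e) := by
  intro e hbe het heN
  have hB := Bk_pos N
  have hblk := bk5 (N := N) ht
  -- e is in block b = t / Bk N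
  have hebk : e / Bk N = t / Bk N := bk4 (by rw [mul_comm]; exact hbe) het
  set b := t / Bk N with hb
  set cc := (e0 + K - 1) / Bk N with hcc
  -- cc ≥ b + 1
  have hcc1 : b + 1 ≤ cc := by
    rw [hcc, Nat.le_div_iff_mul_le (Bk_pos N)]
    have h1 : (b+1) * Bk N = b * Bk N + Bk N := by ring
    omega
  -- qualification of cc for Phi e
  have hqual1 : e / Bk N < cc := by omega
  have hqual2 : cc * Bk N + Bk N ≤ e + K := by
    have h1 : Bk N * cc ≤ e0 + K - 1 := by rw [hcc]; exact bk0 _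
    have h2 : cc * Bk N = Bk N * cc := by ring
    omega
  have h3 : Phi N K R L e ≤ muT N L cc := Phi_le_mu hqual1 hqual2
  have h4 : mr L e0 t ≤ mr L e (cEnd N e) := by
    unfold cEnd
    rw [hebk]
    have : b * Bk N + Bk N - 1 = t := by omega
    rw [this]
    exact mr_mono (by omega) het le_rfl
  have h5 : FF N K R L t e0 ≤ mr L e0 t := min_le_left _ _
  omega

end semlemmas


/-! ### machine-side lemmas -/

section machlemmas
variable {N K R : ℕ} {L : List ℕ} {q : St N R}

lemma PhiM_eq (hK : 1 ≤ K) {e : ℕ}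
    (hmu : ∀ x, x * Bk N < N → dmu q x = muT N L x) (he : e + K ≤ N) :
    PhiM N K R q e = Phi N K R L e := by
  have hB := Bk_pos N
  have hset : {v | ∃ x, e / Bk N < x ∧ x * Bk N + Bk N ≤ e + K ∧ v = dmu q x} =
      {v | ∃ x, e / Bk N < x ∧ x * Bk N + Bk N ≤ e + K ∧ v = muT N L x} := by
    ext v
    constructor
    · rintro ⟨x, h1, h2, rfl⟩
      exact ⟨x, h1, h2, by rw [hmu x (by omega)]⟩
    · rintro ⟨x, h1, h2, rfl⟩
      exact ⟨x, h1, h2, by rw [hmu x (by omega)]⟩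
  unfold PhiM Phi
  rw [hset]

lemma dmu_t (hK : 1 ≤ K) {t : ℕ} (htN : t < N)
    (hmu : ∀ x, x * Bk N < N → dmu q x = muT N L x) :
    dmu q (t / Bk N) = muT N L (t / Bk N) := by
  apply hmu
  have := bk0 (N := N) t
  have h2 : t / Bk N * Bk N = Bk N * (t / Bk N) := by ring
  omega

lemma eBk_lt_nB {e : ℕ} (he : e ≤ N) : e / Bk N < nB N := by
  have h1 := bk3 (N := N) he
  unfold nB
  omega

lemma VV_eq_FF (hK : 1 ≤ K) {t e : ℕ} (hA : ∀ j, Ad L j ≤ R)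
    (he : e + K ≤ N) (het : e ≤ t) (htK : t + 1 ≤ e + K) (htN : t < N)
    (hmu : ∀ x, x * Bk N < N → dmu q x = muT N L x)
    (hraw : ∀ j, Bk N * (t / Bk N) ≤ j → j ≤ t → rawAt q j = Ad L j)
    (hs1 : q.s1i.1 < nB N → ∀ j, q.s1i.1 * Bk N ≤ j → j < q.s1i.1 * Bk N + Bk N →
      s1At q j = Ad L j)
    (hs2 : q.s2i.1 < nB N → ∀ j, q.s2i.1 * Bk N ≤ j → j < q.s2i.1 * Bk N + Bk N →
      s2At q j = Ad L j)
    (hj2 : e / Bk N < t / Bk N → q.s1i.1 ≠ e / Bk N → q.s2i.1 ≠ e / Bk N →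
      Phi N K R L e ≤ mr L e (cEnd N e)) :
    VV N K R q t e = FF N K R L t e := by
  have hB := Bk_pos N
  have hPhiM : PhiM N K R q e = Phi N K R L e := PhiM_eq hK hmu he
  have hrle : mr L e t ≤ R := mr_leR het hA
  have hPhitop : Phi N K R L e ≤ R + 1 := Phi_le_top e
  unfold VV FF
  rw [hPhiM]
  rcases eq_or_lt_of_le (bk3 (N := N) het) with hbt | hbt
  · -- e and t in the same block
    have hrp : rpart N R q t e = mr L e t := by
      unfold rpart
      rw [if_pos hbt]
      apply mr_congr het
      intro j hj1 hj2
      apply hraw j _ hj2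
      have h1 := bk0 (N := N) e
      rw [← hbt]
      omega
    have hov : ownv N R q t e = R + 1 := by
      unfold ownv
      rw [if_neg (by rintro ⟨h1, h2⟩; omega), if_neg (by rintro ⟨h1, h2⟩; omega)]
    rw [hrp, hov]
    omega
  · -- e's block is strictly before t's block
    have hecE : e ≤ cEnd N e := by
      have h1 := bk1 (N := N) e
      have h2 : Bk N * (e / Bk N) = e / Bk N * Bk N := by ring
      unfold cEnd
      omega
    have hblk2 := bk2 (N := N) hbt
    have hcEt : cEnd N e < t := by unfold cEnd; omega
    have hsplit : mr L e t = min (mr L e (cEnd N e)) (mr L (cEnd N e + 1) t) :=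
      mr_split hecE hcEt
    have hcE1 : cEnd N e + 1 = e / Bk N * Bk N + Bk N := by unfold cEnd; omega
    have hrp : rpart N R q t e = mr L (Bk N * (t / Bk N)) t := by
      unfold rpart
      rw [if_neg (by omega)]
      exact mr_congr (bk0 t) (fun j hj1 hj2 => hraw j hj1 hj2)
    have hle : cEnd N e + 1 ≤ Bk N * (t / Bk N) := by
      have h1 : e / Bk N * Bk N + Bk N ≤ t / Bk N * Bk N := by
        have := Nat.mul_le_mul_right (Bk N) (show e / Bk N + 1 ≤ t / Bk N from hbt)
        nlinarith
      have h2 : t / Bk N * Bk N = Bk N * (t / Bk N) := by ring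
      omega
    have htail : min (mr L (cEnd N e + 1) t) (Phi N K R L e) =
        min (mr L (Bk N * (t / Bk N)) t) (Phi N K R L e) := by
      rcases eq_or_lt_of_le hle with hadj | hmidlt
      · rw [hadj]
      · have hb0t := bk0 (N := N) t
        have hmid : mr L (cEnd N e + 1) t =
            min (mr L (cEnd N e + 1) (Bk N * (t / Bk N) - 1))
                (mr L (Bk N * (t / Bk N)) t) := by
          have h9 : Bk N * (t / Bk N) - 1 + 1 = Bk N * (t / Bk N) := by omega
          rw [← h9]
          exact mr_split (by omega) (by omega)
        have hphi_mid : Phi N K R L e ≤ mr L (cEnd N e + 1) (Bk N * (t / Bk N) - 1) := by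
          apply le_mr (by omega)
          intro x hx1 hx2
          have hxN : x < N := by omega
          have hxA := A_ge_muT (L := L) hxN
          refine le_trans (Phi_le_mu ?_ ?_) hxA
          · have h5 : e / Bk N + 1 ≤ x / Bk N := by
              rw [Nat.le_div_iff_mul_le hB]
              have h6 : (e / Bk N + 1) * Bk N = e / Bk N * Bk N + Bk N := by ring
              omega
            omega
          · have hxd : x / Bk N < t / Bk N := by
              by_contra hcon
              push_neg at hcon
              have h7 : Bk N * (t / Bk N) ≤ Bk N * (x / Bk N) := Nat.mul_le_mul_left _ hcon
              have h8 := bk0 (N := N) x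
              omega
            have h9 := bk2 hxd
            omega
        rw [hmid]
        omega
    have hedivnB : e / Bk N < nB N := eBk_lt_nB (by omega)
    by_cases hm1 : q.s1i.1 = e / Bk N
    · have hov : ownv N R q t e = mr L e (cEnd N e) := by
        unfold ownv
        rw [if_pos ⟨hm1, hbt⟩]
        apply mr_congr hecE
        intro j hj1 hj2
        have hb0 := bk0 (N := N) e
        have hcm : Bk N * (e / Bk N) = e / Bk N * Bk N := by ring
        unfold cEnd at hj2
        apply hs1 (by omega) j (by rw [hm1]; omega) (by rw [hm1]; omega)
      rw [hrp, hov]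
      omega
    · by_cases hm2 : q.s2i.1 = e / Bk N
      · have hov : ownv N R q t e = mr L e (cEnd N e) := by
          unfold ownv
          rw [if_neg (by rintro ⟨h1, h2⟩; exact hm1 h1), if_pos ⟨hm2, hbt⟩]
          apply mr_congr hecE
          intro j hj1 hj2
          have hb0 := bk0 (N := N) e
          have hcm : Bk N * (e / Bk N) = e / Bk N * Bk N := by ring
          unfold cEnd at hj2
          apply hs2 (by omega) j (by rw [hm2]; omega) (by rw [hm2]; omega)
        rw [hrp, hov]
        omega
      · have hov : ownv N R q t e = R + 1 := by
          unfold ownv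
          rw [if_neg (by rintro ⟨h1, h2⟩; exact hm1 h1),
              if_neg (by rintro ⟨h1, h2⟩; exact hm2 h1)]
        have hj2' := hj2 hbt (by omega) (by omega)
        have hmrB : mr L (Bk N * (t / Bk N)) t ≤ R := mr_leR (bk0 t) hA
        rw [hrp, hov]
        omega

end machlemmas


section looplemma
variable {N K R : ℕ} {L : List ℕ} {q : St N R}

lemma emitLoop_succ (q : St N R) (t fuel e0 : ℕ) :
    emitLoop N K R q t (fuel+1) e0 =
      if e0 + K ≤ N ∧ e0 ≤ t ∧ (t + 1 = e0 + K ∨ CERT N K R q t e0) then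
        ((emitLoop N K R q t fuel (e0+1)).1,
          VV N K R q t e0 :: (emitLoop N K R q t fuel (e0+1)).2)
      else (e0, []) := rfl

lemma emitLoop_spec (hK : 1 ≤ K) (hA : ∀ j, Ad L j ≤ R) {t : ℕ} (htN : t < N)
    (hmu : ∀ x, x * Bk N < N → dmu q x = muT N L x)
    (hraw : ∀ j, Bk N * (t / Bk N) ≤ j → j ≤ t → rawAt q j = Ad L j)
    (hs1 : q.s1i.1 < nB N → ∀ j, q.s1i.1 * Bk N ≤ j → j < q.s1i.1 * Bk N + Bk N →
      s1At q j = Ad L j)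
    (hs2 : q.s2i.1 < nB N → ∀ j, q.s2i.1 * Bk N ≤ j → j < q.s2i.1 * Bk N + Bk N →
      s2At q j = Ad L j)
    (e0b : ℕ)
    (hj2 : ∀ e, e0b ≤ e → e + K ≤ N → e / Bk N < t / Bk N →
      q.s1i.1 ≠ e / Bk N → q.s2i.1 ≠ e / Bk N → Phi N K R L e ≤ mr L e (cEnd N e)) :
    ∀ fuel e0, N + 2 ≤ fuel + e0 → e0b ≤ e0 → e0 ≤ t + 1 → t + 1 ≤ e0 + K →
      e0 + K ≤ N + 1 →
      ∃ e1 out, emitLoop N K R q t fuel e0 = (e1, out) ∧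
        out = (List.range' e0 (e1 - e0)).map (low K L) ∧
        e0 ≤ e1 ∧ e1 ≤ t + 1 ∧ e1 + K ≤ N + 1 ∧ t + 2 ≤ e1 + K ∧
        (e1 + K = N + 1 ∨ e1 = t + 1 ∨
          (e1 ≤ t ∧ e1 + K ≤ N ∧ t + 1 ≠ e1 + K ∧ ¬ CERT N K R q t e1)) := by
  intro fuel
  induction fuel with
  | zero =>
    intro e0 hfu hb h1 h2 h3
    exfalso
    omega
  | succ fuel ih =>
    intro e0 hfu hb h1 h2 h3
    by_cases hg : e0 + K ≤ N ∧ e0 ≤ t ∧ (t + 1 = e0 + K ∨ CERT N K R q t e0)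
    · obtain ⟨hg1, hg2, hg3⟩ := hg
      obtain ⟨e1, out, heq, hout, h4, h5, h6, h7, h8⟩ :=
        ih (e0+1) (by omega) (by omega) (by omega) (by omega) (by omega)
      have hVF : VV N K R q t e0 = FF N K R L t e0 :=
        VV_eq_FF hK hA hg1 hg2 h2 htN hmu hraw hs1 hs2
          (fun ha hb1 hb2 => hj2 e0 hb hg1 ha hb1 hb2)
      have hlow : low K L e0 = FF N K R L t e0 := by
        rcases hg3 with hfr | hcert
        · have hteq : t = e0 + K - 1 := by omega
          rw [hteq]
          exact frontier_sound hK hg1 hA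
        · apply cert_sound hK hg1 hg2 h2 hA
          · have hc := hcert.1
            rw [hVF, dmu_t hK htN hmu] at hc
            exact hc
          · have hc := hcert.2
            have hlt : (e0 + K - 1) / Bk N * Bk N < N := by
              have := bk0 (N := N) (e0 + K - 1)
              have hcm : Bk N * ((e0 + K - 1) / Bk N) = (e0 + K - 1) / Bk N * Bk N := by
                ring
              omega
            rw [hVF, hmu _ hlt] at hc
            exact hc
      refine ⟨e1, VV N K R q t e0 :: out, ?_, ?_, by omega, h5, h6, h7, h8⟩
      · rw [emitLoop_succ, if_pos ⟨hg1, hg2, hg3⟩, heq]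
      · have hsz : e1 - e0 = (e1 - (e0+1)) + 1 := by omega
        rw [hsz, List.range'_succ, List.map_cons, hout, hVF, ← hlow]
    · refine ⟨e0, [], ?_, by simp, le_rfl, h1, h3, ?_, ?_⟩
      · rw [emitLoop_succ, if_neg hg]
      · rcases le_or_gt (e0+K) N with hA1 | hA1
        · rcases le_or_gt e0 t with hA2 | hA2
          · have hnd : ¬(t+1 = e0+K ∨ CERT N K R q t e0) := fun h => hg ⟨hA1, hA2, h⟩
            push_neg at hnd
            omega
          · omega
        · omega
      · rcases le_or_gt (e0+K) N with hA1 | hA1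
        · rcases le_or_gt e0 t with hA2 | hA2
          · have hnd : ¬(t+1 = e0+K ∨ CERT N K R q t e0) := fun h => hg ⟨hA1, hA2, h⟩
            push_neg at hnd
            right; right
            exact ⟨hA2, hA1, hnd.1, hnd.2⟩
          · right; left; omega
        · left; omega

end looplemma


/-! ### more block arithmetic -/

section blk2
variable {N : ℕ}

lemma bk6 {n : ℕ} (h : (n+1) % Bk N = 0) : (n+1) / Bk N = n / Bk N + 1 := by
  have h5 := bk5 (N := N) h
  apply Nat.div_eq_of_lt_le
  · have : (n / Bk N + 1) * Bk N = n / Bk N * Bk N + Bk N := by ring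
    omega
  · have : (n / Bk N + 1 + 1) * Bk N = n / Bk N * Bk N + Bk N + Bk N := by ring
    have hB := Bk_pos N
    omega

lemma bk7 {n : ℕ} (h : (n+1) % Bk N ≠ 0) : (n+1) / Bk N = n / Bk N := by
  have h1 := Nat.div_add_mod (n+1) (Bk N)
  have h2 := Nat.mod_lt (n+1) (Bk_pos N)
  exact (bk4 (x := n+1) (z := n) (by omega) (by omega)).symm

lemma bk8 {e b : ℕ} (h : e < b * Bk N) : e / Bk N < b := by
  rw [Nat.div_lt_iff_lt_mul (Bk_pos N)]
  exact h

lemma bk9 {e b : ℕ} (h : (b-1) * Bk N ≤ e) : b - 1 ≤ e / Bk N := by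
  rw [Nat.le_div_iff_mul_le (Bk_pos N)]
  exact h

end blk2

/-! ### field lemmas -/

section fields
variable {N R : ℕ} {q : St N R} {a n b e1 : ℕ}

lemma upd1_mu : (upd1 N R q a n).mu = q.mu := rfl
lemma upd1_e0 : (upd1 N R q a n).e0 = q.e0 := rfl
lemma upd1_s1i : (upd1 N R q a n).s1i = q.s1i := rfl
lemma upd1_s1a : (upd1 N R q a n).s1a = q.s1a := rfl
lemma upd1_s2i : (upd1 N R q a n).s2i = q.s2i := rfl
lemma upd1_s2a : (upd1 N R q a n).s2a = q.s2a := rfl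
lemma upd1_pos : (upd1 N R q a n).pos.1 = min (q.pos.1+1) (2*N+1) := rfl
lemma upd1_raw : (upd1 N R q a n).raw = Function.update q.raw (bmod N n) (clampR R a) := rfl

lemma updE_mu : (updE N R q e1).mu = q.mu := rfl
lemma updE_raw : (updE N R q e1).raw = q.raw := rfl
lemma updE_pos : (updE N R q e1).pos = q.pos := rfl
lemma updE_s1i : (updE N R q e1).s1i = q.s1i := rfl
lemma updE_s1a : (updE N R q e1).s1a = q.s1a := rfl
lemma updE_s2i : (updE N R q e1).s2i = q.s2i := rfl
lemma updE_s2a : (updE N R q e1).s2a = q.s2a := rfl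
lemma updE_e0 : (updE N R q e1).e0.1 = min e1 (N+1) := rfl

lemma updS_mu : (updS N R q b).mu = q.mu := by unfold updS; split <;> rfl
lemma updS_raw : (updS N R q b).raw = q.raw := by unfold updS; split <;> rfl
lemma updS_pos : (updS N R q b).pos = q.pos := by unfold updS; split <;> rfl
lemma updS_e0 : (updS N R q b).e0 = q.e0 := by unfold updS; split <;> rfl

lemma updS_s1i_even (h : b % 2 = 0) : (updS N R q b).s1i.1 = min b (nB N) := by
  unfold updS; rw [if_pos h]
lemma updS_s1a_even (h : b % 2 = 0) : (updS N R q b).s1a = q.raw := by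
  unfold updS; rw [if_pos h]
lemma updS_s2i_even (h : b % 2 = 0) : (updS N R q b).s2i = q.s2i := by
  unfold updS; rw [if_pos h]
lemma updS_s2a_even (h : b % 2 = 0) : (updS N R q b).s2a = q.s2a := by
  unfold updS; rw [if_pos h]
lemma updS_s1i_odd (h : ¬ b % 2 = 0) : (updS N R q b).s1i = q.s1i := by
  unfold updS; rw [if_neg h]
lemma updS_s1a_odd (h : ¬ b % 2 = 0) : (updS N R q b).s1a = q.s1a := by
  unfold updS; rw [if_neg h]
lemma updS_s2i_odd (h : ¬ b % 2 = 0) : (updS N R q b).s2i.1 = min b (nB N) := by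
  unfold updS; rw [if_neg h]
lemma updS_s2a_odd (h : ¬ b % 2 = 0) : (updS N R q b).s2a = q.raw := by
  unfold updS; rw [if_neg h]

end fields

/-! ### the step lemma for pass 2 -/

section steplemma
variable {N K R : ℕ} {L : List ℕ}

lemma step2_spec (hK : 1 ≤ K) (hKN : K ≤ N) (hA : ∀ j, Ad L j ≤ R)
    {n : ℕ} {q : St N R} (hn : n < N) (hq : Inv2 N K R L n q) :
    ∃ (q' : St N R) (e1 : ℕ),
      step2 N K R q (Ad L n) =
        (q', (List.range' q.e0.1 (e1 - q.e0.1)).map (low K L)) ∧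
      q'.e0.1 = e1 ∧ q.e0.1 ≤ e1 ∧ Inv2 N K R L (n+1) q' := by
  classical
  have hB := Bk_pos N
  have ht : q.pos.1 - N = n := by have := hq.pos; omega
  have hstep : step2 N K R q (Ad L n) = step2core N K R n q (Ad L n) := by
    unfold step2; rw [ht]
  set a := Ad L n with ha
  set q1 := upd1 N R q a n with hq1def
  -- q1 invariant facts
  have hq1mu : ∀ x, x * Bk N < N → dmu q1 x = muT N L x := by
    intro x hx
    show dmu q1 x = _
    unfold dmu
    rw [hq1def, upd1_mu]
    exact hq.mu x hx
  have hraw1 : ∀ j, Bk N * (n / Bk N) ≤ j → j ≤ n → rawAt q1 j = Ad L j := by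
    intro j hj1 hj2
    show (q1.raw (bmod N j)).1 = Ad L j
    rw [hq1def, upd1_raw]
    rcases eq_or_lt_of_le hj2 with rfl | hjn
    · rw [Function.update_apply, if_pos rfl]
      show min a R = Ad L j
      rw [ha]; have := hA j; omega
    · have hdiv : j / Bk N = n / Bk N := bk4 hj1 (by omega)
      have hoff : bmod N j ≠ bmod N n := by
        have h1 := Nat.div_add_mod j (Bk N)
        have h2 := Nat.div_add_mod n (Bk N)
        have h3 : Bk N * (j / Bk N) = Bk N * (n / Bk N) := by rw [hdiv]
        intro hcon
        have h4 : j % Bk N = n % Bk N := congrArg Fin.val hcon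
        omega
      rw [Function.update_apply, if_neg hoff]
      apply hq.raw j hjn
      have h5 : (n-1) / Bk N ≤ n / Bk N := bk3 (by omega)
      have h6 : Bk N * ((n-1) / Bk N) ≤ Bk N * (n / Bk N) := Nat.mul_le_mul_left _ h5
      omega
  have hs1q1 : q1.s1i.1 < nB N → ∀ j, q1.s1i.1 * Bk N ≤ j →
      j < q1.s1i.1 * Bk N + Bk N → s1At q1 j = Ad L j := by
    rw [hq1def]
    intro h j h1 h2
    show (q.s1a (bmod N j)).1 = Ad L j
    exact (hq.s1c h).2.2 j h1 h2
  have hs2q1 : q1.s2i.1 < nB N → ∀ j, q1.s2i.1 * Bk N ≤ j →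
      j < q1.s2i.1 * Bk N + Bk N → s2At q1 j = Ad L j := by
    rw [hq1def]
    intro h j h1 h2
    show (q.s2a (bmod N j)).1 = Ad L j
    exact (hq.s2c h).2.2 j h1 h2
  have hj2q1 : ∀ e, q.e0.1 ≤ e → e + K ≤ N → e / Bk N < n / Bk N →
      q1.s1i.1 ≠ e / Bk N → q1.s2i.1 ≠ e / Bk N →
      Phi N K R L e ≤ mr L e (cEnd N e) := by
    rw [hq1def]
    intro e h1 h2 h3 h4 h5
    exact hq.j2 e h1 h2 h3 h4 h5
  obtain ⟨e1, out, heq, hout, h4, h5, h6, h7, h8⟩ :=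
    emitLoop_spec hK hA hn hq1mu hraw1 hs1q1 hs2q1 q.e0.1 hj2q1 (N+2) q.e0.1
      (by omega) le_rfl (by have := hq.e0n; omega) (by have := hq.e0K; omega)
      (by have := hq.e0M; omega)
  have he1N : e1 ≤ N := by omega
  set q2 := updE N R q1 e1 with hq2def
  set Q : St N R := if (n+1) % Bk N = 0 ∧ n / Bk N * Bk N ≤ e1 + Bk N then
      updS N R q2 (n / Bk N) else q2 with hQdef
  have hstep2 : step2core N K R n q a = (Q, out) := by
    simp only [step2core]
    rw [← hq1def, heq]
  -- common field facts
  have hQe0 : Q.e0.1 = e1 := by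
    rw [hQdef]
    split
    · rw [show (updS N R q2 (n / Bk N)).e0 = q2.e0 from updS_e0, hq2def]
      show min e1 (N+1) = e1
      omega
    · rw [hq2def]
      show min e1 (N+1) = e1
      omega
  have hQpos : Q.pos.1 = N + (n+1) := by
    have hp : q1.pos.1 = N + (n+1) := by
      rw [hq1def, upd1_pos]
      have := hq.pos
      omega
    rw [hQdef]
    split
    · rw [show (updS N R q2 (n / Bk N)).pos = q2.pos from updS_pos, hq2def, updE_pos, hp]
    · rw [hq2def, updE_pos, hp]
  have hQmu : Q.mu = q.mu := by
    rw [hQdef]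
    split
    · rw [show (updS N R q2 (n / Bk N)).mu = q2.mu from updS_mu, hq2def, updE_mu,
        hq1def, upd1_mu]
    · rw [hq2def, updE_mu, hq1def, upd1_mu]
  have hQraw : Q.raw = q1.raw := by
    rw [hQdef]
    split
    · rw [show (updS N R q2 (n / Bk N)).raw = q2.raw from updS_raw, hq2def, updE_raw]
    · rw [hq2def, updE_raw]
  have hQmu' : ∀ x, x * Bk N < N → dmu Q x = muT N L x := by
    intro x hx
    unfold dmu
    rw [hQmu]
    exact hq.mu x hx
  have hQraw' : ∀ j, j < n+1 → Bk N * ((n+1-1) / Bk N) ≤ j → rawAt Q j = Ad L j := by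
    intro j hj1 hj2
    show (Q.raw (bmod N j)).1 = Ad L j
    rw [hQraw]
    exact hraw1 j (by simpa using hj2) (by omega)
  refine ⟨Q, e1, ?_, hQe0, h4, ?_⟩
  · rw [hstep, hstep2, hout]
  · -- the invariant at n+1
    by_cases hsc : (n+1) % Bk N = 0 ∧ n / Bk N * Bk N ≤ e1 + Bk N
    · -- store case
      have hbB : n / Bk N < nB N := eBk_lt_nB (by omega)
      have hcomp : n / Bk N * Bk N + Bk N = n + 1 := bk5 hsc.1
      have hsdiv : (n+1) / Bk N = n / Bk N + 1 := bk6 hsc.1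
      by_cases hpar : (n / Bk N) % 2 = 0
      · -- stored into slot 1
        have hi1 : Q.s1i.1 = n / Bk N := by
          rw [hQdef, if_pos hsc, updS_s1i_even hpar]
          omega
        have ha1 : Q.s1a = q2.raw := by rw [hQdef, if_pos hsc, updS_s1a_even hpar]
        have hi2 : Q.s2i = q.s2i := by
          rw [hQdef, if_pos hsc, updS_s2i_even hpar, hq2def, updE_s2i, hq1def, upd1_s2i]
        have ha2 : Q.s2a = q.s2a := by
          rw [hQdef, if_pos hsc, updS_s2a_even hpar, hq2def, updE_s2a, hq1def, upd1_s2a]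
        refine ⟨hQpos, by omega, by omega, by omega, hQmu', hQraw', ?_, ?_, ?_⟩
        · -- s1c
          intro _
          refine ⟨by rw [hi1]; exact hpar, by rw [hi1]; omega, ?_⟩
          intro j hj1 hj2
          rw [hi1] at hj1 hj2
          show (Q.s1a (bmod N j)).1 = Ad L j
          rw [ha1, hq2def, updE_raw]
          refine hraw1 j ?_ (by omega)
          have hcm : Bk N * (n / Bk N) = n / Bk N * Bk N := by ring
          omega
        · -- s2c
          intro h
          rw [hi2] at h ⊢
          obtain ⟨p1, p2, p3⟩ := hq.s2c h
          refine ⟨p1, by omega, ?_⟩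
          intro j hj1 hj2
          show (Q.s2a (bmod N j)).1 = Ad L j
          rw [ha2]
          exact p3 j hj1 hj2
        · -- j2
          intro e he0 heK hesc hs1ne hs2ne
          rw [hQe0] at he0
          rw [hsdiv] at hesc
          rw [hi1] at hs1ne
          rw [hi2] at hs2ne
          rcases lt_or_eq_of_le (show e / Bk N ≤ n / Bk N by omega) with helt | heeq
          · -- old block: use old j2; overwritten slot handled by parity
            apply hq.j2 e (by omega) heK helt _ hs2ne
            -- old s1i ≠ e / Bk N
            intro hcon
            by_cases ho : q.s1i.1 < nB N
            · have hp0 := (hq.s1c ho).1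
              -- e/B = b - 1 with b even and e/B parity 0 : contradiction
              have hblow : n / Bk N - 1 ≤ e / Bk N := by
                apply bk9
                have h9 : (n / Bk N - 1) * Bk N + Bk N = n / Bk N * Bk N ∨ n / Bk N = 0 := by
                  rcases Nat.eq_zero_or_pos (n / Bk N) with h0 | h0
                  · right; exact h0
                  · left
                    have : (n / Bk N - 1) + 1 = n / Bk N := by omega
                    calc (n / Bk N - 1) * Bk N + Bk N = ((n / Bk N - 1) + 1) * Bk N := by
                          ring
                    _ = n / Bk N * Bk N := by rw [this]
                rcases h9 with h9 | h9
                · omega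
                · omega
              have : e / Bk N = n / Bk N - 1 := by omega
              rw [hcon] at hp0
              omega
            · have : q.s1i.1 = nB N := by have := q.s1i.2; omega
              have helt2 : e / Bk N < nB N := eBk_lt_nB (by omega)
              omega
          · -- e in the stored block: contradiction with hs1ne
            exact absurd heeq.symm hs1ne
      · -- stored into slot 2 (odd parity)
        have hi2 : Q.s2i.1 = n / Bk N := by
          rw [hQdef, if_pos hsc, updS_s2i_odd hpar]
          omega
        have ha2 : Q.s2a = q2.raw := by rw [hQdef, if_pos hsc, updS_s2a_odd hpar]
        have hi1 : Q.s1i = q.s1i := by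
          rw [hQdef, if_pos hsc, updS_s1i_odd hpar, hq2def, updE_s1i, hq1def, upd1_s1i]
        have ha1 : Q.s1a = q.s1a := by
          rw [hQdef, if_pos hsc, updS_s1a_odd hpar, hq2def, updE_s1a, hq1def, upd1_s1a]
        refine ⟨hQpos, by omega, by omega, by omega, hQmu', hQraw', ?_, ?_, ?_⟩
        · -- s1c
          intro h
          rw [hi1] at h ⊢
          obtain ⟨p1, p2, p3⟩ := hq.s1c h
          refine ⟨p1, by omega, ?_⟩
          intro j hj1 hj2
          show (Q.s1a (bmod N j)).1 = Ad L j
          rw [ha1]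
          exact p3 j hj1 hj2
        · -- s2c
          intro _
          refine ⟨by rw [hi2]; omega, by rw [hi2]; omega, ?_⟩
          intro j hj1 hj2
          rw [hi2] at hj1 hj2
          show (Q.s2a (bmod N j)).1 = Ad L j
          rw [ha2, hq2def, updE_raw]
          refine hraw1 j ?_ (by omega)
          have hcm : Bk N * (n / Bk N) = n / Bk N * Bk N := by ring
          omega
        · -- j2
          intro e he0 heK hesc hs1ne hs2ne
          rw [hQe0] at he0
          rw [hsdiv] at hesc
          rw [hi2] at hs2ne
          rw [hi1] at hs1ne
          rcases lt_or_eq_of_le (show e / Bk N ≤ n / Bk N by omega) with helt | heeq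
          · apply hq.j2 e (by omega) heK helt hs1ne _
            intro hcon
            by_cases ho : q.s2i.1 < nB N
            · have hp0 := (hq.s2c ho).1
              have hblow : n / Bk N - 1 ≤ e / Bk N := by
                apply bk9
                have h9 : (n / Bk N - 1) * Bk N + Bk N = n / Bk N * Bk N ∨ n / Bk N = 0 := by
                  rcases Nat.eq_zero_or_pos (n / Bk N) with h0 | h0
                  · right; exact h0
                  · left
                    have h99 : (n / Bk N - 1) + 1 = n / Bk N := by omega
                    calc (n / Bk N - 1) * Bk N + Bk N = ((n / Bk N - 1) + 1) * Bk N := by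
                          ring
                    _ = n / Bk N * Bk N := by rw [h99]
                rcases h9 with h9 | h9
                · omega
                · omega
              have : e / Bk N = n / Bk N - 1 := by omega
              rw [hcon] at hp0
              omega
            · have : q.s2i.1 = nB N := by have := q.s2i.2; omega
              have helt2 : e / Bk N < nB N := eBk_lt_nB (by omega)
              omega
          · exact absurd heeq.symm hs2ne
    · -- no store
      have hi1 : Q.s1i = q.s1i := by
        rw [hQdef, if_neg hsc, hq2def, updE_s1i, hq1def, upd1_s1i]
      have ha1 : Q.s1a = q.s1a := by
        rw [hQdef, if_neg hsc, hq2def, updE_s1a, hq1def, upd1_s1a]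
      have hi2 : Q.s2i = q.s2i := by
        rw [hQdef, if_neg hsc, hq2def, updE_s2i, hq1def, upd1_s2i]
      have ha2 : Q.s2a = q.s2a := by
        rw [hQdef, if_neg hsc, hq2def, updE_s2a, hq1def, upd1_s2a]
      refine ⟨hQpos, by omega, by omega, by omega, hQmu', hQraw', ?_, ?_, ?_⟩
      · intro h
        rw [hi1] at h ⊢
        obtain ⟨p1, p2, p3⟩ := hq.s1c h
        refine ⟨p1, by omega, ?_⟩
        intro j hj1 hj2
        show (Q.s1a (bmod N j)).1 = Ad L j
        rw [ha1]
        exact p3 j hj1 hj2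
      · intro h
        rw [hi2] at h ⊢
        obtain ⟨p1, p2, p3⟩ := hq.s2c h
        refine ⟨p1, by omega, ?_⟩
        intro j hj1 hj2
        show (Q.s2a (bmod N j)).1 = Ad L j
        rw [ha2]
        exact p3 j hj1 hj2
      · -- j2 in the no-store case
        intro e he0 heK hesc hs1ne hs2ne
        rw [hQe0] at he0
        rw [hi1] at hs1ne
        rw [hi2] at hs2ne
        by_cases hbd : (n+1) % Bk N = 0
        · rw [bk6 hbd] at hesc
          rcases lt_or_eq_of_le (show e / Bk N ≤ n / Bk N by omega) with helt | heeq
          · exact hq.j2 e (by omega) heK helt hs1ne hs2ne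
          · -- the freshly completed block was NOT stored: establish j2
            have hnostore : ¬ (n / Bk N * Bk N ≤ e1 + Bk N) := fun hcc => hsc ⟨hbd, hcc⟩
            push_neg at hnostore
            have hen : e ≤ n := by
              have h10 := bk1 (N := N) e
              have h11 : Bk N * (e / Bk N) = e / Bk N * Bk N := by ring
              have hcomp := bk5 (N := N) hbd
              rw [heeq] at h10 h11
              omega
            have hbe : n / Bk N * Bk N ≤ e := by
              have h10 := bk0 (N := N) e
              have h11 : Bk N * (e / Bk N) = e / Bk N * Bk N := by ring
              rw [heeq] at h10 h11
              omega
            -- exit disjunction: only the third case is possible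
            rcases h8 with hc1 | hc2 | ⟨he1n, he1K, hfr, hnc⟩
            · omega
            · omega
            · have hVF : VV N K R q1 n e1 = FF N K R L n e1 :=
                VV_eq_FF hK hA he1K he1n (by omega) hn hq1mu hraw1 hs1q1 hs2q1
                  (fun hx h1 h2 => hj2q1 e1 h4 he1K hx h1 h2)
              have hcomp := bk5 (N := N) hbd
              have hAhold : VV N K R q1 n e1 ≤ dmu q1 (n / Bk N) := by
                rw [hVF, dmu_t hK hn hq1mu]
                have hmin : min (n / Bk N * Bk N + Bk N) N = n / Bk N * Bk N + Bk N := by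
                  omega
                unfold muT
                rw [hmin]
                have hidx : n / Bk N * Bk N + Bk N - 1 = n := by omega
                rw [hidx]
                calc FF N K R L n e1 ≤ mr L e1 n := min_le_left _ _
                _ ≤ mr L (n / Bk N * Bk N) n := mr_mono (by omega) (by omega) le_rfl
              have hBfail : dmu q1 ((e1 + K - 1) / Bk N) < VV N K R q1 n e1 := by
                unfold CERT at hnc
                push_neg at hnc
                exact hnc hAhold
              have hnc2 : muT N L ((e1 + K - 1) / Bk N) < FF N K R L n e1 := by
                have hlt : (e1 + K - 1) / Bk N * Bk N < N := by
                  have h20 := bk0 (N := N) (e1 + K - 1)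
                  have h21 : Bk N * ((e1 + K - 1) / Bk N) =
                      (e1 + K - 1) / Bk N * Bk N := by ring
                  omega
                rw [← hq1mu _ hlt, ← hVF]
                exact hBfail
              exact j2_establish hK hbd hn he1n hfr (by omega) (by omega) hnc2 e hbe hen heK
        · rw [bk7 hbd] at hesc
          exact hq.j2 e (by omega) heK hesc hs1ne hs2ne

end steplemma


/-! ### running pass 2 -/

section pass2run
variable {N K R : ℕ} {L : List ℕ}

lemma runPass_nil {Q I O : Type} (f : Q → I → Q × List O) (q : Q) :
    runPass f q [] = (q, []) := rfl

lemma runPass_cons {Q I O : Type} (f : Q → I → Q × List O) (q : Q) (x : I) (xs : List I) :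
    runPass f q (x :: xs) =
      ((runPass f (f q x).1 xs).1, (f q x).2 ++ (runPass f (f q x).1 xs).2) := rfl

lemma pass2_run (hK : 1 ≤ K) (hKN : K ≤ N) (hL : L.length = N) (hA : ∀ j, Ad L j ≤ R) :
    ∀ d n (q : St N R), n + d = N → Inv2 N K R L n q →
      (runPass (step2 N K R) q (L.drop n)).2 =
        (List.range' q.e0.1 (N - K + 1 - q.e0.1)).map (low K L) := by
  intro d
  induction d with
  | zero =>
    intro n q hn hq
    have hdrop : L.drop n = [] := List.drop_eq_nil_of_le (by omega)
    rw [hdrop, runPass_nil]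
    have he0 : q.e0.1 = N - K + 1 := by
      have h1 := hq.e0K
      have h2 := hq.e0M
      omega
    rw [he0]
    simp
  | succ d ih =>
    intro n q hn hq
    have hnN : n < N := by omega
    have hlen : n < L.length := by omega
    have hdrop : L.drop n = L[n] :: L.drop (n+1) := List.drop_eq_getElem_cons hlen
    have hget : L[n] = Ad L n := by
      unfold Ad
      rw [List.getD_eq_getElem L 0 hlen]
    obtain ⟨q', e1, hstep, hq'e0, hle, hinv⟩ := step2_spec hK hKN hA hnN hq
    rw [hdrop, hget, runPass_cons, hstep]
    dsimp only
    rw [ih (n+1) q' (by omega) hinv, hq'e0]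
    have he1M : e1 + K ≤ N + 1 := by
      have := hinv.e0M
      rw [hq'e0] at this
      exact this
    have h := List.range'_append (s := q.e0.1) (m := e1 - q.e0.1) (n := N - K + 1 - e1) (step := 1)
    have h1 : q.e0.1 + 1 * (e1 - q.e0.1) = e1 := by omega
    have h2 : (e1 - q.e0.1) + (N - K + 1 - e1) = N - K + 1 - q.e0.1 := by omega
    rw [h1, h2] at h
    rw [← List.map_append, h]

end pass2run

/-! ### pass 1 -/

section pass1sec
variable (N K R : ℕ) (L : List ℕ)

structure Inv1 (n : ℕ) (q : St N R) : Prop where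
  pos : q.pos.1 = n
  e0 : q.e0.1 = 0
  s1 : q.s1i.1 = nB N
  s2 : q.s2i.1 = nB N
  mufull : ∀ x, x * Bk N + Bk N ≤ n → dmu q x = muT N L x
  acc1 : n < N → n % Bk N ≠ 0 → q.acc.1 = mr L (Bk N * (n / Bk N)) (n-1)
  acc0 : n < N → n % Bk N = 0 → q.acc.1 = R + 1
  mufinal : n = N → ∀ x, x * Bk N < N → dmu q x = muT N L x

variable {N K R L}

lemma step1_spec (hN : 2 ≤ N) (hA : ∀ j, Ad L j ≤ R)
    {n : ℕ} {q : St N R} (hn : n < N) (hq : Inv1 N R L n q) :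
    ∃ q', step1 N R q (Ad L n) = (q', []) ∧ Inv1 N R L (n+1) q' := by
  classical
  have hB := Bk_pos N
  have ht : q.pos.1 = n := hq.pos
  have hstep : step1 N R q (Ad L n) = step1core N R n q (Ad L n) := by
    unfold step1; rw [ht]
  set a := Ad L n with ha
  have haR : a ≤ R := hA n
  have hblt : n / Bk N < nB N := eBk_lt_nB (by omega)
  set Q1 : St N R := {q with
    pos := ⟨min (n+1) (2*N+1), by omega⟩,
    acc := if (n+1) % Bk N = 0 ∨ n+1 = N then ⟨R+1, by omega⟩
      else ⟨min (min (q.acc.1) a) R, by omega⟩,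
    mu := if (n+1) % Bk N = 0 ∨ n+1 = N then
        (if h : n / Bk N < nB N then
          Function.update q.mu ⟨n / Bk N, h⟩ ⟨min (min (q.acc.1) a) R, by omega⟩
        else q.mu)
      else q.mu} with hQ1
  have hcore : step1core N R n q a = (Q1, []) := rfl
  -- the value that gets stored on completion
  have hv : min (min (q.acc.1) a) R = mr L (Bk N * (n / Bk N)) n := by
    by_cases hmod : n % Bk N = 0
    · have hacc := hq.acc0 hn hmod
      have hself : Bk N * (n / Bk N) = n := by
        have h1 := Nat.div_add_mod n (Bk N)
        omega
      rw [hacc, hself, mr_single, ← ha]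
      omega
    · have hacc := hq.acc1 hn hmod
      have hlt : Bk N * (n / Bk N) < n := by
        have h1 := Nat.div_add_mod n (Bk N)
        have h2 := Nat.mod_lt n hB
        omega
      have hsp : mr L (Bk N * (n / Bk N)) n =
          min (mr L (Bk N * (n / Bk N)) (n-1)) (mr L n n) := by
        have h3 := mr_split (L := L) (a := Bk N * (n / Bk N)) (c := n-1) (b := n)
          (by omega) (by omega)
        have hn1 : n - 1 + 1 = n := by omega
        rw [hn1] at h3
        exact h3
      have hmr1 : mr L (Bk N * (n / Bk N)) (n-1) ≤ R := mr_leR (by omega) hA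
      rw [hsp, mr_single, hacc, ← ha]
      omega
  -- the stored value matches muT when the block completes
  have hmuT : ((n+1) % Bk N = 0 ∨ n+1 = N) →
      muT N L (n / Bk N) = mr L (Bk N * (n / Bk N)) n := by
    intro hdone
    unfold muT
    have h1 := bk1 (N := N) n
    have hcm : n / Bk N * Bk N = Bk N * (n / Bk N) := by ring
    have hidx : min (n / Bk N * Bk N + Bk N) N - 1 = n := by
      rcases hdone with hd | hd
      · have h5 := bk5 (N := N) hd
        omega
      · omega
    rw [hidx, hcm]
  -- main mu clause
  have hmufull : ∀ x, x * Bk N + Bk N ≤ n + 1 → dmu Q1 x = muT N L x := by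
    intro x hx
    by_cases hdone : (n+1) % Bk N = 0 ∨ n+1 = N
    · have hmu1 : Q1.mu = (if h : n / Bk N < nB N then
          Function.update q.mu ⟨n / Bk N, h⟩ ⟨min (min (q.acc.1) a) R, by omega⟩
        else q.mu) := by
        rw [hQ1]
        exact if_pos hdone
      have hxnB : x < nB N := by
        have h5 : x + 1 ≤ N / Bk N := by
          rw [Nat.le_div_iff_mul_le hB]
          have h6 : (x+1) * Bk N = x * Bk N + Bk N := by ring
          omega
        unfold nB
        omega
      unfold dmu
      rw [hmu1, dif_pos hblt, dif_pos hxnB]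
      by_cases hxd : x = n / Bk N
      · subst hxd
        rw [Function.update_apply, if_pos rfl]
        show min (min (q.acc.1) a) R = _
        rw [hv, hmuT hdone]
      · rw [Function.update_apply,
          if_neg (by intro hcon; exact hxd (by simpa using congrArg Fin.val hcon))]
        have hxn : x * Bk N + Bk N ≤ n := by
          by_contra hc
          have hfull : x * Bk N + Bk N = n + 1 := by omega
          apply hxd
          have h7 : x * Bk N ≤ n := by omega
          have h8 : n < (x+1) * Bk N := by
            have : (x+1) * Bk N = x * Bk N + Bk N := by ring
            omega
          have := Nat.div_eq_of_lt_le h7 h8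
          omega
        have hold := hq.mufull x hxn
        unfold dmu at hold
        rw [dif_pos hxnB] at hold
        exact hold
    · have hmu1 : Q1.mu = q.mu := by
        rw [hQ1]
        exact if_neg hdone
      have hxn : x * Bk N + Bk N ≤ n := by
        by_contra hc
        have hfull : x * Bk N + Bk N = n + 1 := by omega
        apply hdone
        left
        have : n + 1 = (x + 1) * Bk N := by
          have : (x+1) * Bk N = x * Bk N + Bk N := by ring
          omega
        rw [this]
        exact Nat.mul_mod_left _ _
      have hold := hq.mufull x hxn
      unfold dmu at hold ⊢
      rw [hmu1]
      exact hold
  refine ⟨Q1, by rw [hstep, hcore], ?_, hq.e0, hq.s1, hq.s2, hmufull, ?_, ?_, ?_⟩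
  · -- pos
    show (min (n+1) (2*N+1)) = n+1
    omega
  · -- acc1
    intro hlt hmod
    have hdone : ¬ ((n+1) % Bk N = 0 ∨ n+1 = N) := by
      push_neg
      exact ⟨hmod, by omega⟩
    have hacc1 : Q1.acc = if (n+1) % Bk N = 0 ∨ n+1 = N then (⟨R+1, by omega⟩ : Fin (R+2))
        else ⟨min (min (q.acc.1) a) R, by omega⟩ := by rw [hQ1]
    rw [hacc1, if_neg hdone]
    show min (min (q.acc.1) a) R = _
    rw [hv, bk7 hmod]
    have h9 : n + 1 - 1 = n := by omega
    rw [h9]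
  · -- acc0
    intro hlt hmod
    have hdone : (n+1) % Bk N = 0 ∨ n+1 = N := Or.inl hmod
    have hacc1 : Q1.acc = if (n+1) % Bk N = 0 ∨ n+1 = N then (⟨R+1, by omega⟩ : Fin (R+2))
        else ⟨min (min (q.acc.1) a) R, by omega⟩ := by rw [hQ1]
    rw [hacc1, if_pos hdone]
  · -- mufinal
    intro hNeq x hx
    have hdone : (n+1) % Bk N = 0 ∨ n+1 = N := Or.inr hNeq
    by_cases hfull : x * Bk N + Bk N ≤ n + 1
    · exact hmufull x hfull
    · -- partial final block: x = n / Bk N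
      have hxd : x = n / Bk N := by
        have h7 : x * Bk N ≤ n := by omega
        have h8 : n < (x+1) * Bk N := by
          have h9 : (x+1) * Bk N = x * Bk N + Bk N := by ring
          omega
        have := Nat.div_eq_of_lt_le h7 h8
        omega
      have hxnB : x < nB N := by rw [hxd]; exact hblt
      have hmu1 : Q1.mu = (if h : n / Bk N < nB N then
          Function.update q.mu ⟨n / Bk N, h⟩ ⟨min (min (q.acc.1) a) R, by omega⟩
        else q.mu) := by
        rw [hQ1]
        exact if_pos hdone
      unfold dmu
      rw [hmu1, dif_pos hblt, dif_pos hxnB]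
      subst hxd
      rw [Function.update_apply, if_pos rfl]
      show min (min (q.acc.1) a) R = _
      rw [hv, hmuT hdone]

end pass1sec


/-! ### running pass 1, initialization -/

section runall
variable {N K R : ℕ} {L : List ℕ}

lemma inv1_init (hN : 2 ≤ N) : Inv1 N R L 0 (init0 N R) := by
  constructor
  · rfl
  · rfl
  · rfl
  · rfl
  · intro x hx
    exfalso
    have := Bk_pos N
    omega
  · intro _ hmod
    exfalso
    exact hmod (Nat.zero_mod _)
  · intro _ _
    rfl
  · intro h
    exfalso
    omega

lemma pass1_run (hN : 2 ≤ N) (hL : L.length = N) (hA : ∀ j, Ad L j ≤ R) :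
    ∀ d n (q : St N R), n + d = N → Inv1 N R L n q →
      ∃ qF, runPass (step1 N R) q (L.drop n) = (qF, []) ∧ Inv1 N R L N qF := by
  intro d
  induction d with
  | zero =>
    intro n q hn hq
    refine ⟨q, ?_, ?_⟩
    · rw [List.drop_eq_nil_of_le (by omega), runPass_nil]
    · rwa [show n = N by omega] at hq
  | succ d ih =>
    intro n q hn hq
    have hnN : n < N := by omega
    have hlen : n < L.length := by omega
    have hdrop : L.drop n = L[n] :: L.drop (n+1) := List.drop_eq_getElem_cons hlen
    have hget : L[n] = Ad L n := by
      unfold Ad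
      rw [List.getD_eq_getElem L 0 hlen]
    obtain ⟨q', hstep, hinv⟩ := step1_spec hN hA hnN hq
    obtain ⟨qF, hrun, hfin⟩ := ih (n+1) q' (by omega) hinv
    refine ⟨qF, ?_, hfin⟩
    rw [hdrop, hget, runPass_cons, hstep]
    dsimp only
    rw [hrun]
    simp

lemma inv2_init (hK : 1 ≤ K) (hKN : K ≤ N) {qF : St N R}
    (h : Inv1 N R L N qF) : Inv2 N K R L 0 qF := by
  constructor
  · rw [h.pos]; omega
  · rw [h.e0]
  · rw [h.e0]; omega
  · rw [h.e0]; omega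
  · exact h.mufinal rfl
  · intro j hj _
    exfalso
    omega
  · intro hcon
    rw [h.s1] at hcon
    exact absurd hcon (lt_irrefl _)
  · intro hcon
    rw [h.s2] at hcon
    exact absurd hcon (lt_irrefl _)
  · intro e _ _ hlt _ _
    rw [Nat.zero_div] at hlt
    exact absurd hlt (Nat.not_lt_zero _)

/-! ### the algorithm is correct -/

lemma theAlg_solves (hN : 2 ≤ N) (hK : 1 ≤ K) (hKN : K ≤ N) :
    SolvesMin (theAlg N K R) N K R := by
  intro L hL hLR
  have hA : ∀ j, Ad L j ≤ R := by
    intro j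
    unfold Ad
    rcases lt_or_ge j L.length with h | h
    · rw [List.getD_eq_getElem L 0 h]
      exact hLR _ (List.getElem_mem h)
    · rw [List.getD_eq_default L 0 h]
      omega
  have hini : (theAlg N K R).init = init0 N R := rfl
  have hst0 : (theAlg N K R).step 0 = step1 N R := rfl
  have hst1 : (theAlg N K R).step 1 = step2 N K R := rfl
  obtain ⟨qF, hrun1, hfin⟩ :=
    pass1_run hN hL hA N 0 (init0 N R) (by omega) (inv1_init hN)
  rw [List.drop_zero] at hrun1
  have hinv2 := inv2_init (L := L) hK hKN hfin
  have hrun2 :=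
    pass2_run hK hKN hL hA N 0 qF (by omega) hinv2
  rw [List.drop_zero, hfin.e0] at hrun2
  unfold StreamAlg.output StreamAlg.passOutputs
  have hfr : (List.finRange 2) = [0, 1] := by decide
  rw [hfr]
  simp only [List.foldl_cons, List.foldl_nil]
  rw [hini, hst0, hst1, hrun1]
  dsimp only
  simp only [List.nil_append, List.flatten]
  rw [hrun2]
  simp only [List.cons_append, List.nil_append, List.flatten_cons, List.flatten_nil, List.append_nil]
  apply List.ext_getElem
  · simp
  · intro i h1 h2
    simp only [List.getElem_map, List.getElem_range', List.getElem_ofFn]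
    norm_num
    rfl

end runall


/-! ### cardinality -/

instance (N R : ℕ) : Nonempty (St N R) := ⟨init0 N R⟩

lemma card_St_le (N R : ℕ) : Fintype.card (St N R) ≤
    ((R+2)*(N+2)) ^ (nB N + 3 * Bk N + 5) := by
  have hc : Fintype.card (St N R) =
      (2*N+2) * ((N+2) * ((R+2) * ((R+1)^(nB N) * ((R+1)^(Bk N) *
        ((nB N+1) * ((R+1)^(Bk N) * ((nB N+1) * (R+1)^(Bk N)))))))) := by
    rw [Fintype.card_congr (stEquiv N R)]
    simp [Fintype.card_prod, Fintype.card_fun, Fintype.card_fin]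
  rw [hc]
  set M := (R+2)*(N+2) with hMdef
  have h1 : 2*N+2 ≤ M := by
    have h := Nat.mul_le_mul_right (N+2) (show 2 ≤ R+2 by omega)
    omega
  have h2 : N+2 ≤ M := by
    have h := Nat.mul_le_mul_right (N+2) (show 1 ≤ R+2 by omega)
    omega
  have h3 : R+2 ≤ M := by
    have h := Nat.mul_le_mul_left (R+2) (show 1 ≤ N+2 by omega)
    omega
  have h4 : R+1 ≤ M := by omega
  have h5 : nB N + 1 ≤ M := by
    have h6 : N / Bk N ≤ N := Nat.div_le_self _ _
    unfold nB
    omega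
  calc (2*N+2) * ((N+2) * ((R+2) * ((R+1)^(nB N) * ((R+1)^(Bk N) *
        ((nB N+1) * ((R+1)^(Bk N) * ((nB N+1) * (R+1)^(Bk N))))))))
      ≤ M * (M * (M * (M^(nB N) * (M^(Bk N) * (M * (M^(Bk N) * (M * M^(Bk N)))))))) := by
        gcongr <;> omega
  _ = M ^ (nB N + 3 * Bk N + 5) := by ring

lemma logb_card_le (N R : ℕ) (hN : 2 ≤ N) (hR : 2 ≤ R) :
    Real.logb 2 (Fintype.card (St N R)) ≤
      100 * Real.sqrt N * (Real.logb 2 R + Real.logb 2 N) := by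
  have hcard := card_St_le N R
  set M := (R+2)*(N+2) with hMdef
  set T := nB N + 3 * Bk N + 5 with hTdef
  have hcpos : (0 : ℝ) < (Fintype.card (St N R) : ℝ) := by
    have := Fintype.card_pos (α := St N R)
    positivity
  have hMpos : (1 : ℝ) ≤ (M : ℝ) := by
    have h0 : 0 < M := by positivity
    exact_mod_cast h0
  have step1 : Real.logb 2 (Fintype.card (St N R)) ≤ Real.logb 2 ((M : ℝ) ^ T) := by
    apply (Real.logb_le_logb (by norm_num) hcpos (by positivity)).mpr
    exact_mod_cast hcard
  have step2 : Real.logb 2 ((M : ℝ) ^ T) = (T : ℝ) * Real.logb 2 (M : ℝ) :=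
    Real.logb_pow _ _ _
  -- logb 2 M ≤ 2 logb R + 2 logb N
  have hMle : (M : ℝ) ≤ (R : ℝ)^2 * (N : ℝ)^2 := by
    have h1 : (R+2)*(N+2) ≤ R^2 * N^2 := by
      apply Nat.mul_le_mul <;> nlinarith
    exact_mod_cast h1
  have step3 : Real.logb 2 (M : ℝ) ≤ 2 * Real.logb 2 R + 2 * Real.logb 2 N := by
    have h2 : Real.logb 2 ((R : ℝ)^2 * (N : ℝ)^2) =
        2 * Real.logb 2 R + 2 * Real.logb 2 N := by
      rw [Real.logb_mul (by positivity) (by positivity), Real.logb_pow, Real.logb_pow]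
      push_cast
      ring
    rw [← h2]
    apply (Real.logb_le_logb (by norm_num) (by positivity) (by positivity)).mpr hMle
  have hMnn : 0 ≤ Real.logb 2 (M : ℝ) := Real.logb_nonneg (by norm_num) hMpos
  -- T ≤ 13 sqrt N
  have hsq : (Nat.sqrt N : ℝ) ≤ Real.sqrt N := by
    rw [Real.le_sqrt (by positivity) (by positivity)]
    have h1 : Nat.sqrt N * Nat.sqrt N ≤ N := Nat.sqrt_le N
    have h2 : ((Nat.sqrt N : ℝ))^2 = ((Nat.sqrt N * Nat.sqrt N : ℕ) : ℝ) := by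
      push_cast; ring
    rw [h2]
    exact_mod_cast h1
  have hsq1 : (1 : ℝ) ≤ Real.sqrt N := Real.one_le_sqrt.mpr (by exact_mod_cast (by omega : 1 ≤ N))
  have hTle : (T : ℝ) ≤ 13 * Real.sqrt N := by
    have hnb : nB N ≤ Bk N := by
      have h7 : N / Bk N < Bk N := by
        rw [Nat.div_lt_iff_lt_mul (Bk_pos N)]
        exact Nat.lt_succ_sqrt N
      unfold nB
      omega
    have hbk : Bk N = Nat.sqrt N + 1 := rfl
    rw [hbk] at hnb
    have hT9 : (T : ℝ) ≤ 4 * (Nat.sqrt N : ℝ) + 9 := by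
      have h8 : T ≤ 4 * Nat.sqrt N + 9 := by
        rw [hTdef, hbk]
        omega
      exact_mod_cast h8
    nlinarith [hsq, hsq1]
  have hlogR : (1 : ℝ) ≤ Real.logb 2 R := by
    rw [show (1 : ℝ) = Real.logb 2 2 from (Real.logb_self_eq_one (by norm_num)).symm]
    apply (Real.logb_le_logb (by norm_num) (by norm_num) (by positivity)).mpr
    exact_mod_cast hR
  have hlogN : (1 : ℝ) ≤ Real.logb 2 N := by
    rw [show (1 : ℝ) = Real.logb 2 2 from (Real.logb_self_eq_one (by norm_num)).symm]
    apply (Real.logb_le_logb (by norm_num) (by norm_num) (by positivity)).mpr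
    exact_mod_cast hN
  calc Real.logb 2 (Fintype.card (St N R)) ≤ (T : ℝ) * Real.logb 2 (M : ℝ) := by
        rw [← step2]; exact step1
  _ ≤ (13 * Real.sqrt N) * Real.logb 2 (M : ℝ) := by
        apply mul_le_mul_of_nonneg_right hTle hMnn
  _ ≤ (13 * Real.sqrt N) * (2 * Real.logb 2 R + 2 * Real.logb 2 N) := by
        apply mul_le_mul_of_nonneg_left step3 (by positivity)
  _ ≤ 100 * Real.sqrt N * (Real.logb 2 R + Real.logb 2 N) := by
        nlinarith [hsq1, hlogR, hlogN]

end
end SWM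


/-- Sliding-window minimum has a `2`-pass streaming algorithm with
`O(√N·(log R + log N))` bits of space. -/
theorem stmt_13 :
    ∃ C : ℝ, 0 < C ∧
      ∀ N R K : ℕ, 2 ≤ N → 2 ≤ R → 1 ≤ K → K ≤ N →
        ∃ (Q : Type) (_ : Fintype Q) (alg : StreamAlg Q 2 ℕ ℕ),
          SolvesMin alg N K R ∧
          Real.logb 2 (Fintype.card Q) ≤
            C * Real.sqrt N * (Real.logb 2 R + Real.logb 2 N) := by
  refine ⟨100, by norm_num, ?_⟩
  intro N R K hN hR hK hKN
  exact ⟨SWM.St N R, inferInstance, SWM.theAlg N K R,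
    SWM.theAlg_solves hN hK hKN, SWM.logb_card_le N R hN hR⟩
end

section
/- For every constant number of passes p ≥ 1 there exists ε > 0 such that for all sufficiently large N the following holds: for every M ≤ ε·√N there exists a window length K with 1 ≤ K ≤ N such that no p-pass streaming algorithm with state space Q of size |Q| ≤ 2^M solves the sliding-window minimum problem with parameters (N, K, R) where R = K. Consequently, no algorithm in the p-pass streaming model (with a single output pass) solves sliding-window minimum in o(√N) space uniformly over all window sizes K when the maximum element value is R = K. -/
namespace SWM

variable {Q : Type}

abbrev StepF (Q : Type) := Q → ℕ → Q × List ℕ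

lemma runPass_append (f : StepF Q) (q : Q) (l₁ l₂ : List ℕ) :
    runPass f q (l₁ ++ l₂) =
      ((runPass f (runPass f q l₁).1 l₂).1,
        (runPass f q l₁).2 ++ (runPass f (runPass f q l₁).1 l₂).2) := by
  induction l₁ generalizing q with
  | nil => simp [runPass]
  | cons x xs ih => simp [runPass, ih]

/-- Run a list of step functions (one pass each), collecting per-pass outputs. -/
def runsFrom (fs : List (StepF Q)) (q : Q) (L : List ℕ) : Q × List (List ℕ) :=
  match fs with
  | [] => (q, [])
  | f :: fs' =>
    let r := runPass f q L
    let s := runsFrom fs' r.1 L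
    (s.1, r.2 :: s.2)

lemma foldl_runsFrom (fs : List (StepF Q)) (q : Q) (L : List ℕ) (acc : List (List ℕ)) :
    fs.foldl (fun acc f => ((runPass f acc.1 L).1, acc.2 ++ [(runPass f acc.1 L).2])) (q, acc)
      = ((runsFrom fs q L).1, acc ++ (runsFrom fs q L).2) := by
  induction fs generalizing q acc with
  | nil => simp [runsFrom]
  | cons f fs ih => simp [runsFrom, ih]

lemma output_eq {p : ℕ} (alg : StreamAlg Q p ℕ ℕ) (L : List ℕ) :
    alg.output L = (runsFrom ((List.finRange p).map alg.step) alg.init L).2.flatten := by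
  unfold StreamAlg.output StreamAlg.passOutputs
  rw [← List.foldl_map (f := alg.step)
    (g := fun acc f => ((runPass f acc.1 L).1, acc.2 ++ [(runPass f acc.1 L).2]))]
  rw [foldl_runsFrom]; simp

/-- Per-pass decomposition at a cut:  entries `(s, A, c, B)` where `s` is the state at
the start of the pass, `A` the output over the prefix, `c` the state at the cut,
`B` the output over the suffix. -/
def dec (fs : List (StepF Q)) (q : Q) (P S : List ℕ) : List (Q × List ℕ × Q × List ℕ) :=
  match fs with
  | [] => []
  | f :: fs' =>
    let a := runPass f q P
    let b := runPass f a.1 S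
    (q, a.2, a.1, b.2) :: dec fs' b.1 P S

lemma dec_map_out (fs : List (StepF Q)) (q : Q) (P S : List ℕ) :
    (runsFrom fs q (P ++ S)).2 = (dec fs q P S).map (fun e => e.2.1 ++ e.2.2.2) := by
  induction fs generalizing q with
  | nil => simp [runsFrom, dec]
  | cons f fs ih => simp [runsFrom, dec, runPass_append, ih]

def statesOf (fs : List (StepF Q)) (q : Q) (L : List ℕ) : List Q :=
  match fs with
  | [] => []
  | f :: fs' => q :: statesOf fs' (runPass f q L).1 L

lemma dec_map_s (fs : List (StepF Q)) (q : Q) (P S : List ℕ) :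
    (dec fs q P S).map (fun e => e.1) = statesOf fs q (P ++ S) := by
  induction fs generalizing q with
  | nil => simp [dec, statesOf]
  | cons f fs ih => simp [dec, statesOf, runPass_append, ih]

lemma dec_A_eq (fs : List (StepF Q)) (q q' : Q) (P S S' : List ℕ)
    (h : (dec fs q P S).map (fun e => e.1) = (dec fs q' P S').map (fun e => e.1)) :
    (dec fs q P S).map (fun e => e.2.1) = (dec fs q' P S').map (fun e => e.2.1) := by
  induction fs generalizing q q' with
  | nil => simp [dec]
  | cons f fs ih =>
    simp only [dec, List.map_cons, List.cons.injEq] at h ⊢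
    obtain ⟨hq, ht⟩ := h
    subst hq
    exact ⟨rfl, ih _ _ ht⟩

lemma dec_B_eq (fs : List (StepF Q)) (q q' : Q) (P P' S : List ℕ)
    (h : (dec fs q P S).map (fun e => e.2.2.1) = (dec fs q' P' S).map (fun e => e.2.2.1)) :
    (dec fs q P S).map (fun e => e.2.2.2) = (dec fs q' P' S).map (fun e => e.2.2.2) := by
  induction fs generalizing q q' with
  | nil => simp [dec]
  | cons f fs ih =>
    simp only [dec, List.map_cons, List.cons.injEq] at h ⊢
    obtain ⟨hc, ht⟩ := h
    refine ⟨by rw [hc], ih _ _ (by rw [hc] at ht ⊢; exact ht)⟩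

def segsOf (d : List (Q × List ℕ × Q × List ℕ)) : List (List ℕ) :=
  d.flatMap (fun e => [e.2.1, e.2.2.2])

lemma segsOf_flatten (d : List (Q × List ℕ × Q × List ℕ)) :
    (segsOf d).flatten = ((d.map (fun e => e.2.1 ++ e.2.2.2)).flatten) := by
  induction d with
  | nil => rfl
  | cons e d ih => simp [segsOf] at ih ⊢; simp [ih]

lemma segsOf_length (d : List (Q × List ℕ × Q × List ℕ)) :
    (segsOf d).length = 2 * d.length := by
  induction d with
  | nil => rfl
  | cons e d ih => simp [segsOf] at ih ⊢; omega

lemma segsOf_even (d : List (Q × List ℕ × Q × List ℕ)) (k : ℕ) (hk : k < d.length) :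
    (segsOf d)[2*k]? = some (d[k].2.1) := by
  induction d generalizing k with
  | nil => simp at hk
  | cons e d ih =>
    cases k with
    | zero => simp [segsOf]
    | succ k =>
      have : 2 * (k+1) = (2*k) + 1 + 1 := by ring
      simp [segsOf, this]
      exact ih k (by simpa using hk)

lemma segsOf_odd (d : List (Q × List ℕ × Q × List ℕ)) (k : ℕ) (hk : k < d.length) :
    (segsOf d)[2*k+1]? = some (d[k].2.2.2) := by
  induction d generalizing k with
  | nil => simp at hk
  | cons e d ih =>
    cases k with
    | zero => simp [segsOf]
    | succ k =>
      have : 2 * (k+1) + 1 = (2*k+1) + 1 + 1 := by ring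
      simp [segsOf, this]
      exact ih k (by simpa using hk)

/-- Offset of the `k`-th segment inside the flattened list. -/
def offs (u : List (List ℕ)) (k : ℕ) : ℕ := ((u.map List.length).take k).sum

lemma offs_congr (u v : List (List ℕ)) (h : u.map List.length = v.map List.length) (k : ℕ) :
    offs u k = offs v k := by unfold offs; rw [h]

lemma flatten_getElem?_seg (u : List (List ℕ)) (k j : ℕ) (hk : k < u.length)
    (hj : j < u[k].length) :
    u.flatten[offs u k + j]? = u[k][j]? := by
  induction u generalizing k with
  | nil => simp at hk
  | cons a u ih =>
    cases k with
    | zero =>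
      simp only [offs, List.take_zero, List.sum_nil, Nat.zero_add, List.flatten_cons]
      rw [List.getElem?_append_left (by simpa using hj)]
      simp
    | succ k =>
      have hoff : offs (a :: u) (k+1) = a.length + offs u k := by
        simp [offs, List.take_succ_cons]
      simp only [hoff, List.flatten_cons]
      rw [Nat.add_assoc, List.getElem?_append_right (by omega)]
      simp only [Nat.add_sub_cancel_left]
      exact ih k (by simpa using hk) (by simpa using hj)

lemma flatten_cover (u : List (List ℕ)) (i : ℕ) (h : i < u.flatten.length) :
    ∃ k j, ∃ hk : k < u.length, j < u[k].length ∧ i = offs u k + j := by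
  induction u generalizing i with
  | nil => simp at h
  | cons a u ih =>
    by_cases hia : i < a.length
    · exact ⟨0, i, by simp, by simpa using hia, by simp [offs]⟩
    · have : i - a.length < u.flatten.length := by
        simp only [List.flatten_cons, List.length_append] at h; omega
      obtain ⟨k, j, hk, hj, hij⟩ := ih (i - a.length) this
      refine ⟨k+1, j, by simpa using hk, by simpa using hj, ?_⟩
      have hoff : offs (a :: u) (k+1) = a.length + offs u k := by
        simp [offs, List.take_succ_cons]
      omega

end SWM
namespace SWM

/-- The hard input family: `G` "teeth" of length `6*B2` each.  Within a tooth,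
positions `r < 2*B2` are increasing "slots" (`2r+1` or `2r+2`, free bits at
`B2 ≤ r < 2*B2`), position `5*B2 - 1` is a "toggle" (value `B2` when on), and all
remaining positions are high (`4*B2`). -/
def inpF (B2 G : ℕ) (a : ℕ → ℕ → Bool) (τ : ℕ → Bool) (j : ℕ) : ℕ :=
  if j < 6*B2*G then
    if j % (6*B2) < 2*B2 then
      2*(j % (6*B2)) + (if B2 ≤ j % (6*B2) ∧ a (j / (6*B2)) (j % (6*B2) - B2) then 2 else 1)
    else if j % (6*B2) = 5*B2 - 1 ∧ τ (j / (6*B2)) = true then B2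
    else 4*B2
  else 4*B2

def famL (N B2 G : ℕ) (a : ℕ → ℕ → Bool) (τ : ℕ → Bool) : List ℕ :=
  List.ofFn (n := N) fun k => inpF B2 G a τ k

lemma famL_length (N B2 G a τ) : (famL N B2 G a τ).length = N := by
  simp [famL]

lemma inpF_le (B2 G a τ j) : inpF B2 G a τ j ≤ 4*B2 := by
  unfold inpF
  split
  · split
    · rename_i h1 h2
      have : (if B2 ≤ j % (6*B2) ∧ a (j / (6*B2)) (j % (6*B2) - B2) then 2 else 1) ≤ 2 := by
        split <;> omega
      omega
    · split <;> omega
  · omega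

lemma famL_le (N B2 G a τ) : ∀ x ∈ famL N B2 G a τ, x ≤ 4*B2 := by
  intro x hx
  simp only [famL, List.mem_ofFn] at hx
  obtain ⟨k, rfl⟩ := hx
  exact inpF_le _ _ _ _ _

lemma famL_getD (N B2 G a τ k) (hk : k < N) :
    (famL N B2 G a τ).getD k 0 = inpF B2 G a τ k := by
  unfold famL
  rw [List.getD_eq_getElem?_getD]
  simp [List.getElem?_ofFn, hk]

lemma inpF_tooth (B2 G : ℕ) (hB2 : 0 < B2) (a τ) (t w : ℕ) (ht : t < G) (hw : w < 6*B2) :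
    inpF B2 G a τ (6*B2*t + w) =
      if w < 2*B2 then 2*w + (if B2 ≤ w ∧ a t (w - B2) then 2 else 1)
      else if w = 5*B2 - 1 ∧ τ t = true then B2
      else 4*B2 := by
  have h1 : 6*B2*(t+1) ≤ 6*B2*G := Nat.mul_le_mul_left _ (by omega)
  have h2 : 6*B2*(t+1) = 6*B2*t + 6*B2 := by ring
  have hc : 6*B2*t + w = w + 6*B2*t := by ring
  have hd : (w + 6*B2*t) / (6*B2) = t := by
    rw [Nat.add_mul_div_left _ _ (by omega : 0 < 6*B2)]
    rw [Nat.div_eq_of_lt hw]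
    omega
  have hm : (w + 6*B2*t) % (6*B2) = w := by
    rw [Nat.add_mul_mod_self_left]
    exact Nat.mod_eq_of_lt hw
  unfold inpF
  rw [hc, if_pos (by omega : w + 6*B2*t < 6*B2*G), hd, hm]

lemma sInf_eq_of (s : Set ℕ) (v : ℕ) (hmem : v ∈ s) (hlb : ∀ y ∈ s, v ≤ y) : sInf s = v :=
  le_antisymm (Nat.sInf_le hmem) (le_csInf ⟨v, hmem⟩ hlb)

/-- The key window-minimum computation for the family. -/
lemma low_tooth (B2 G N : ℕ) (a : ℕ → ℕ → Bool) (τ : ℕ → Bool) (t i : ℕ)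
    (hB2 : 0 < B2) (ht : t < G) (hi1 : B2 ≤ i) (hi2 : i < 2*B2)
    (hN : 6*B2*G + 4*B2 ≤ N) :
    lowL (famL N B2 G a τ) (4*B2) (6*B2*t + i)
      = if τ t then B2 else 2*i + (if a t (i - B2) then 2 else 1) := by
  have h1 : 6*B2*(t+1) ≤ 6*B2*G := Nat.mul_le_mul_left _ (by omega)
  have h2 : 6*B2*(t+1) = 6*B2*t + 6*B2 := by ring
  unfold lowL
  apply sInf_eq_of
  · -- membership
    by_cases hτ : τ t
    · refine ⟨6*B2*t + (5*B2 - 1), ⟨by omega, by omega⟩, ?_⟩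
      show (famL N B2 G a τ).getD (6*B2*t + (5*B2 - 1)) 0 = _
      rw [famL_getD _ _ _ _ _ _ (by omega), inpF_tooth _ _ hB2 _ _ _ _ ht (by omega)]
      rw [if_neg (by omega), if_pos ⟨rfl, hτ⟩, if_pos hτ]
    · refine ⟨6*B2*t + i, ⟨by omega, by omega⟩, ?_⟩
      show (famL N B2 G a τ).getD (6*B2*t + i) 0 = _
      rw [famL_getD _ _ _ _ _ _ (by omega), inpF_tooth _ _ hB2 _ _ _ _ ht (by omega)]
      rw [if_pos hi2, if_neg hτ]
      by_cases ha : a t (i - B2) <;> simp [ha, hi1]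
  · rintro y ⟨u, ⟨hu1, hu2⟩, rfl⟩
    show _ ≤ (famL N B2 G a τ).getD u 0
    obtain ⟨w, huw, hw1, hw2, hw3⟩ :
        ∃ w, u = 6*B2*t + w ∧ i ≤ w ∧ w ≤ i + 4*B2 - 1 ∧ w < 6*B2 :=
      ⟨u - 6*B2*t, by omega, by omega, by omega, by omega⟩
    rw [huw, famL_getD _ _ _ _ _ _ (by omega), inpF_tooth _ _ hB2 _ _ _ _ ht hw3]
    by_cases hw4 : w < 2*B2
    · rw [if_pos hw4]
      have hl1 : (1:ℕ) ≤ (if B2 ≤ w ∧ a t (w - B2) = true then 2 else 1) := by split <;> omega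
      have hl2 : (if B2 ≤ w ∧ a t (w - B2) = true then 2 else 1) ≤ 2 := by split <;> omega
      have hm2 : (if a t (i - B2) = true then 2 else 1) ≤ 2 := by split <;> omega
      rcases Nat.lt_or_ge i w with hlt | hge
      · split
        · omega
        · omega
      · have hiw : w = i := by omega
        subst hiw
        by_cases ha : a t (w - B2) = true <;> by_cases hτ : τ t = true <;>
          simp [ha, hτ, hi1] <;> omega
    · rw [if_neg hw4]
      have hm2 : (if a t (i - B2) = true then 2 else 1) ≤ 2 := by split <;> omega
      by_cases hc : w = 5*B2 - 1 ∧ τ t = true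
      · rw [if_pos hc, if_pos hc.2]
      · rw [if_neg hc]
        split <;> omega

end SWM
namespace SWM

variable {Q : Type}

lemma statesOf_length (fs : List (StepF Q)) (q : Q) (L : List ℕ) :
    (statesOf fs q L).length = fs.length := by
  induction fs generalizing q with
  | nil => rfl
  | cons f fs ih => simp [statesOf, ih]

lemma runsFrom_length (fs : List (StepF Q)) (q : Q) (L : List ℕ) :
    (runsFrom fs q L).2.length = fs.length := by
  induction fs generalizing q with
  | nil => rfl
  | cons f fs ih => simp [runsFrom, ih]

lemma dec_length (fs : List (StepF Q)) (q : Q) (P S : List ℕ) :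
    (dec fs q P S).length = fs.length := by
  induction fs generalizing q with
  | nil => rfl
  | cons f fs ih => simp [dec, ih]

/-- From `map f` and `map (f + g)` equal, deduce `map g` equal. -/
lemma map_add_cancel {α β : Type*} (f g : α → ℕ) (f' g' : β → ℕ) :
    ∀ (l : List α) (l' : List β), l.map f = l'.map f' →
      l.map (fun x => f x + g x) = l'.map (fun x => f' x + g' x) →
      l.map g = l'.map g'
  | [], [], _, _ => rfl
  | [], _ :: _, h, _ => by simp at h
  | _ :: _, [], h, _ => by simp at h
  | x :: l, y :: l', h1, h2 => by
    simp only [List.map_cons, List.cons.injEq] at h1 h2 ⊢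
    exact ⟨by omega, map_add_cancel f g f' g' l l' h1.2 h2.2⟩

lemma flatMap_pair_eq {α β : Type*} (f g : α → ℕ) (f' g' : β → ℕ) :
    ∀ (l : List α) (l' : List β), l.map f = l'.map f' → l.map g = l'.map g' →
      l.flatMap (fun e => [f e, g e]) = l'.flatMap (fun e => [f' e, g' e])
  | [], [], _, _ => rfl
  | [], _ :: _, h, _ => by simp at h
  | _ :: _, [], h, _ => by simp at h
  | x :: l, y :: l', h1, h2 => by
    simp only [List.map_cons, List.cons.injEq] at h1 h2
    simp only [List.flatMap_cons]
    rw [h1.1, h2.1, flatMap_pair_eq f g f' g' l l' h1.2 h2.2]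

lemma segsOf_map_length (d : List (Q × List ℕ × Q × List ℕ)) :
    (segsOf d).map List.length
      = d.flatMap (fun e => [e.2.1.length, e.2.2.2.length]) := by
  induction d with
  | nil => rfl
  | cons e d ih => simp [segsOf, List.flatMap_cons] at ih ⊢; exact ih

lemma list_eq_of_getD {α : Type*} (d : α) (n : ℕ) (l l' : List α)
    (h : l.length = n) (h' : l'.length = n)
    (hf : ∀ q : Fin n, l.getD q d = l'.getD q d) : l = l' := by
  apply List.ext_getElem (by omega)
  intro m hm hm'
  have := hf ⟨m, by omega⟩
  rwa [List.getD_eq_getElem _ _ (by omega), List.getD_eq_getElem _ _ (by omega)] at this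

lemma inpF_congr_below (B2 G : ℕ) (a : ℕ → ℕ → Bool) (τ τ' : ℕ → Bool) (t0 : ℕ)
    (hB2 : 0 < B2) (hag : ∀ u, u < t0 → τ u = τ' u) (j : ℕ)
    (hj : j < 6*B2*t0 + (5*B2 - 1)) :
    inpF B2 G a τ j = inpF B2 G a τ' j := by
  have hu := Nat.div_add_mod j (6*B2)
  have hm : j % (6*B2) < 6*B2 := Nat.mod_lt _ (by omega)
  rcases Nat.lt_or_ge (j / (6*B2)) t0 with h | h
  · unfold inpF; rw [hag _ h]
  · have hut : j / (6*B2) = t0 := by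
      rcases Nat.lt_or_ge (j / (6*B2)) (t0+1) with h' | h'
      · omega
      · exfalso
        have h2 : 6*B2*(t0+1) ≤ 6*B2*(j / (6*B2)) := Nat.mul_le_mul_left _ h'
        have h3 : 6*B2*(t0+1) = 6*B2*t0 + 6*B2 := by ring
        omega
    have hr : j % (6*B2) ≠ 5*B2 - 1 := by
      rw [hut] at hu; omega
    by_cases hbig : j < 6*B2*G
    · unfold inpF
      rw [if_pos hbig, if_pos hbig]
      by_cases hsl : j % (6*B2) < 2*B2
      · rw [if_pos hsl, if_pos hsl]
      · rw [if_neg hsl, if_neg hsl,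
          if_neg (fun hc : _ ∧ _ => hr hc.1), if_neg (fun hc : _ ∧ _ => hr hc.1)]
    · unfold inpF
      rw [if_neg hbig, if_neg hbig]

lemma inpF_congr_above (B2 G : ℕ) (a a' : ℕ → ℕ → Bool) (τ : ℕ → Bool) (t0 : ℕ)
    (hB2 : 0 < B2) (hag : ∀ u s, u ≠ t0 → a u s = a' u s) (j : ℕ)
    (hj : 6*B2*t0 + (5*B2 - 1) ≤ j) :
    inpF B2 G a τ j = inpF B2 G a' τ j := by
  have hu := Nat.div_add_mod j (6*B2)
  have hm : j % (6*B2) < 6*B2 := Nat.mod_lt _ (by omega)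
  by_cases h : j / (6*B2) = t0
  · have hr : ¬ (j % (6*B2) < 2*B2) := by
      rw [h] at hu; omega
    unfold inpF
    rw [if_neg hr, if_neg hr]
  · unfold inpF
    rw [hag _ (j % (6*B2) - B2) h]

lemma famL_take_eq (N B2 G : ℕ) (a : ℕ → ℕ → Bool) (τ τ' : ℕ → Bool) (t0 : ℕ)
    (hB2 : 0 < B2) (hag : ∀ u, u < t0 → τ u = τ' u) :
    (famL N B2 G a τ).take (6*B2*t0 + (5*B2 - 1))
      = (famL N B2 G a τ').take (6*B2*t0 + (5*B2 - 1)) := by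
  apply List.ext_getElem (by simp [famL])
  intro m hm hm'
  simp only [List.getElem_take, famL, List.getElem_ofFn]
  exact inpF_congr_below _ _ _ _ _ _ hB2 hag _ (by simp [famL] at hm; omega)

lemma famL_drop_eq (N B2 G : ℕ) (a a' : ℕ → ℕ → Bool) (τ : ℕ → Bool) (t0 : ℕ)
    (hB2 : 0 < B2) (hag : ∀ u s, u ≠ t0 → a u s = a' u s) :
    (famL N B2 G a τ).drop (6*B2*t0 + (5*B2 - 1))
      = (famL N B2 G a' τ).drop (6*B2*t0 + (5*B2 - 1)) := by
  apply List.ext_getElem (by simp [famL])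
  intro m hm hm'
  simp only [List.getElem_drop, famL, List.getElem_ofFn]
  exact inpF_congr_above _ _ _ _ _ _ hB2 hag _ (by omega)

/-- `(m+1)^3 + 2 ≤ 2^m` for `m ≥ 12`. -/
lemma cube_le_pow (m : ℕ) (hm : 12 ≤ m) : (m+1)^3 + 2 ≤ 2^m := by
  induction m with
  | zero => omega
  | succ m ih =>
    rcases Nat.lt_or_ge m 12 with h | h
    · have hm11 : m = 11 := by omega
      subst hm11; norm_num
    · have h1 := ih h
      have h2 : (m+2)^3 + 2 ≤ 2*((m+1)^3 + 2) := by
        have e1 : (m+2)^3 = m^3 + 6*m^2 + 12*m + 8 := by ring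
        have e2 : 2*((m+1)^3 + 2) = 2*m^3 + 6*m^2 + 6*m + 6 := by ring
        rw [e1, e2]
        nlinarith [sq_nonneg m, h]
      have h3 : 2^(m+1) = 2*2^m := by ring
      calc (m+1+1)^3 + 2 = (m+2)^3 + 2 := by ring_nf
        _ ≤ 2*((m+1)^3+2) := h2
        _ ≤ 2*2^m := by omega
        _ = 2^(m+1) := by ring
      
lemma exists_N0 (c : ℕ) : ∃ N0 : ℕ, ∀ N, N0 ≤ N → c * (Nat.size (N+2))^2 ≤ N := by
  refine ⟨2^(c + 14), fun N hN => ?_⟩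
  set s := Nat.size (N+2) with hs
  have hls : c + 14 < s := by
    rw [hs, Nat.lt_size]
    calc 2^(c+14) ≤ N := hN
      _ ≤ N + 2 := by omega
  have hlow : 2^(s-1) ≤ N + 2 := by
    have : s - 1 < s := by omega
    rw [Nat.lt_size] at this
    exact this
  have hcube : ((s-1)+1)^3 + 2 ≤ 2^(s-1) := cube_le_pow _ (by omega)
  have hss : ((s-1)+1) = s := by omega
  rw [hss] at hcube
  have hcs : c * s^2 + 2 ≤ s^3 + 2 := by
    have : c * s^2 ≤ s * s^2 := Nat.mul_le_mul_right _ (by omega)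
    nlinarith
  omega

end SWM
namespace SWM

lemma map_entry_eq {α β γ : Type*} (f : α → γ) (g : β → γ) (l : List α) (l' : List β)
    (h : l.map f = l'.map g) (q : ℕ) (hq : q < l.length) (hq' : q < l'.length) :
    f (l[q]) = g (l'[q]) := by
  have e := List.getElem_of_eq h (show q < (l.map f).length by simpa using hq)
  simpa using e

lemma card_split {ι X : Type*} [Fintype ι] [DecidableEq ι] [Fintype X] [DecidableEq X]
    (t : ι) (c : X) :
    Fintype.card {g : ι → X // g t = c} * Fintype.card X = Fintype.card (ι → X) := by
  classical
  have e : (ι → X) ≃ {g : ι → X // g t = c} × X :=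
    { toFun := fun f => (⟨Function.update f t c, Function.update_self _ _ _⟩, f t)
      invFun := fun pr => Function.update pr.1.1 t pr.2
      left_inv := fun f => by
        funext u
        by_cases hu : u = t
        · subst hu; simp
        · simp [Function.update_of_ne hu]
      right_inv := fun pr => by
        refine Prod.ext ?_ ?_
        · apply Subtype.ext
          funext u
          by_cases hu : u = t
          · subst hu; simp [pr.1.2]
          · simp [Function.update_of_ne hu]
        · simp }
  rw [← Fintype.card_prod, Fintype.card_congr e]

lemma getElem?_eq_some_getElem {α : Type*} (l : List α) (i : ℕ) (h : i < l.length) :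
    l[i]? = some (l[i]) := by
  simp [List.getElem?_eq_getElem, h]

end SWM
namespace SWM

def fsOf {Q : Type} {p : ℕ} (alg : StreamAlg Q p ℕ ℕ) : List (StepF Q) :=
  (List.finRange p).map alg.step

lemma fsOf_length {Q : Type} {p : ℕ} (alg : StreamAlg Q p ℕ ℕ) : (fsOf alg).length = p := by
  simp [fsOf]

def aF (B2 G : ℕ) (h : Fin G → Fin B2 → Bool) : ℕ → ℕ → Bool :=
  fun u s => if hu : u < G then (if hs : s < B2 then h ⟨u, hu⟩ ⟨s, hs⟩ else false) else false

def tF (G : ℕ) (τv : Fin G → Bool) : ℕ → Bool :=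
  fun u => if hu : u < G then τv ⟨u, hu⟩ else false

def famX (N B2 G : ℕ) (h : Fin G → Fin B2 → Bool) (τv : Fin G → Bool) : List ℕ :=
  famL N B2 G (aF B2 G h) (tF G τv)

def Dcut (B2 t : ℕ) : ℕ := 6*B2*t + (5*B2 - 1)

def decX {Q : Type} {p : ℕ} (alg : StreamAlg Q p ℕ ℕ) (N B2 G : ℕ)
    (h : Fin G → Fin B2 → Bool) (τv : Fin G → Bool) (t : ℕ) :
    List (Q × List ℕ × Q × List ℕ) :=
  dec (fsOf alg) alg.init ((famX N B2 G h τv).take (Dcut B2 t))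
    ((famX N B2 G h τv).drop (Dcut B2 t))

def sigOf {Q : Type} {p : ℕ} (alg : StreamAlg Q p ℕ ℕ) (N : ℕ) (x : List ℕ) :
    (Fin p → Q) × (Fin p → Fin (N+2)) :=
  (fun q => (statesOf (fsOf alg) alg.init x).getD q alg.init,
   fun q => ⟨min (((runsFrom (fsOf alg) alg.init x).2.map List.length).getD q 0) (N+1),
      by omega⟩)

def sigCOf {Q : Type} {p : ℕ} (alg : StreamAlg Q p ℕ ℕ) (N B2 G : ℕ)
    (h : Fin G → Fin B2 → Bool) (τv : Fin G → Bool) (t : ℕ) :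
    (Fin p → Q) × (Fin p → Fin (N+2)) :=
  (fun q => ((decX alg N B2 G h τv t).map (fun e => e.2.2.1)).getD q alg.init,
   fun q => ⟨min (((runsFrom (fsOf alg) alg.init (famX N B2 G h τv)).2.map
        List.length).getD q 0) (N+1), by omega⟩)

def GOODx {Q : Type} {p : ℕ} (alg : StreamAlg Q p ℕ ℕ) (N B2 G : ℕ)
    (h : Fin G → Fin B2 → Bool) (τv : Fin G → Bool) (t : ℕ) : Prop :=
  ∀ i, B2 ≤ i → i < 2*B2 →
    ¬ ∃ q j, ∃ hq : q < (decX alg N B2 G h τv t).length,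
        j < ((decX alg N B2 G h τv t)[q]).2.1.length ∧
        6*B2*t + i = offs (segsOf (decX alg N B2 G h τv t)) (2*q) + j

section Facts

variable {Q : Type} {p : ℕ} (alg : StreamAlg Q p ℕ ℕ) (N B2 G : ℕ)
  (h : Fin G → Fin B2 → Bool) (τv : Fin G → Bool)

lemma output_eq2 {Q : Type} {p : ℕ} (alg : StreamAlg Q p ℕ ℕ) (L : List ℕ) :
    alg.output L = (runsFrom (fsOf alg) alg.init L).2.flatten := by
  rw [fsOf]; exact output_eq alg L

lemma output_fam (hsol : SolvesMin alg N (4*B2) (4*B2)) :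
    alg.output (famX N B2 G h τv)
      = List.ofFn (fun i : Fin (N - 4*B2 + 1) => lowL (famX N B2 G h τv) (4*B2) i) :=
  hsol _ (famL_length _ _ _ _ _) (famL_le _ _ _ _ _)

lemma out_len (hsol : SolvesMin alg N (4*B2) (4*B2)) :
    (alg.output (famX N B2 G h τv)).length = N - 4*B2 + 1 := by
  rw [output_fam alg N B2 G h τv hsol]; simp

lemma out_val (hsol : SolvesMin alg N (4*B2) (4*B2)) (hB2 : 0 < B2)
    (hNlay : 6*B2*G + 4*B2 ≤ N) (t i : ℕ) (ht : t < G) (hi1 : B2 ≤ i) (hi2 : i < 2*B2) :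
    (alg.output (famX N B2 G h τv))[6*B2*t + i]?
      = some (if τv ⟨t, ht⟩ then B2 else 2*i + (if aF B2 G h t (i - B2) then 2 else 1)) := by
  have hmul : 6*B2*(t+1) ≤ 6*B2*G := Nat.mul_le_mul_left _ (by omega)
  have hmul2 : 6*B2*(t+1) = 6*B2*t + 6*B2 := by ring
  rw [output_fam alg N B2 G h τv hsol]
  rw [List.getElem?_ofFn]
  rw [dif_pos (by omega : 6*B2*t + i < N - 4*B2 + 1)]
  congr 1
  show lowL (famX N B2 G h τv) (4*B2) (6*B2*t + i) = _
  rw [famX, low_tooth B2 G N (aF B2 G h) (tF G τv) t i hB2 ht hi1 hi2 hNlay]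
  have htf : tF G τv t = τv ⟨t, ht⟩ := by simp [tF, ht]
  rw [htf]

lemma out_seg (t : ℕ) :
    alg.output (famX N B2 G h τv) = (segsOf (decX alg N B2 G h τv t)).flatten := by
  rw [output_eq2, segsOf_flatten, decX, ← dec_map_out,
    List.take_append_drop]

lemma decX_len (t : ℕ) : (decX alg N B2 G h τv t).length = p := by
  rw [decX, dec_length, fsOf_length]

lemma decX_map_s (t : ℕ) :
    (decX alg N B2 G h τv t).map (fun e => e.1)
      = statesOf (fsOf alg) alg.init (famX N B2 G h τv) := by
  rw [decX, dec_map_s, List.take_append_drop]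

lemma totals_eq_dec (t : ℕ) :
    (runsFrom (fsOf alg) alg.init (famX N B2 G h τv)).2.map List.length
      = (decX alg N B2 G h τv t).map (fun e => e.2.1.length + e.2.2.2.length) := by
  conv_lhs => rw [← List.take_append_drop (Dcut B2 t) (famX N B2 G h τv)]
  rw [dec_map_out, List.map_map]
  apply List.map_congr_left
  intro e _
  simp

lemma totals_le (hsol : SolvesMin alg N (4*B2) (4*B2)) :
    ∀ v ∈ (runsFrom (fsOf alg) alg.init (famX N B2 G h τv)).2.map List.length, v ≤ N+1 := by
  intro v hv
  have hsum : ((runsFrom (fsOf alg) alg.init (famX N B2 G h τv)).2.map List.length).sum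
      = N - 4*B2 + 1 := by
    rw [← List.length_flatten, ← output_eq2, out_len alg N B2 G h τv hsol]
  have := List.single_le_sum (l := (runsFrom (fsOf alg) alg.init
      (famX N B2 G h τv)).2.map List.length) (fun x _ => Nat.zero_le x) v hv
  omega

lemma statesOf_len_p (x : List ℕ) :
    (statesOf (fsOf alg) alg.init x).length = p := by
  rw [statesOf_length, fsOf_length]

lemma totV_len_p (x : List ℕ) :
    ((runsFrom (fsOf alg) alg.init x).2.map List.length).length = p := by
  rw [List.length_map, runsFrom_length, fsOf_length]

/-- Decoding a signature equality. -/
lemma sig_decode (τv' : Fin G → Bool) (hsol : SolvesMin alg N (4*B2) (4*B2))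
    (hsig : sigOf alg N (famX N B2 G h τv) = sigOf alg N (famX N B2 G h τv')) :
    statesOf (fsOf alg) alg.init (famX N B2 G h τv)
        = statesOf (fsOf alg) alg.init (famX N B2 G h τv')
      ∧ (runsFrom (fsOf alg) alg.init (famX N B2 G h τv)).2.map List.length
        = (runsFrom (fsOf alg) alg.init (famX N B2 G h τv')).2.map List.length := by
  obtain ⟨h1, h2⟩ := Prod.mk.injEq .. ▸ hsig
  constructor
  · apply list_eq_of_getD alg.init p _ _ (statesOf_len_p alg _) (statesOf_len_p alg _)
    intro q
    exact congrFun h1 q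
  · apply list_eq_of_getD 0 p _ _ (totV_len_p alg _) (totV_len_p alg _)
    intro q
    have e := congrFun h2 q
    have e' : min (((runsFrom (fsOf alg) alg.init (famX N B2 G h τv)).2.map
          List.length).getD q 0) (N+1)
        = min (((runsFrom (fsOf alg) alg.init (famX N B2 G h τv')).2.map
          List.length).getD q 0) (N+1) := congrArg Fin.val e
    have b1 : ((runsFrom (fsOf alg) alg.init (famX N B2 G h τv)).2.map
        List.length).getD q 0 ≤ N+1 := by
      have hq : (q : ℕ) < ((runsFrom (fsOf alg) alg.init (famX N B2 G h τv)).2.map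
          List.length).length := by rw [totV_len_p]; exact q.2
      rw [List.getD_eq_getElem _ _ hq]
      exact totals_le alg N B2 G h τv hsol _ (List.getElem_mem _)
    have b2 : ((runsFrom (fsOf alg) alg.init (famX N B2 G h τv')).2.map
        List.length).getD q 0 ≤ N+1 := by
      have hq : (q : ℕ) < ((runsFrom (fsOf alg) alg.init (famX N B2 G h τv')).2.map
          List.length).length := by rw [totV_len_p]; exact q.2
      rw [List.getD_eq_getElem _ _ hq]
      exact totals_le alg N B2 G h τv' hsol _ (List.getElem_mem _)
    omega

end Facts

end SWM
namespace SWM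

lemma case1_contra {Q : Type} {p : ℕ} (alg : StreamAlg Q p ℕ ℕ) (N B2 G : ℕ)
    (hB2 : 0 < B2) (hNlay : 6*B2*G + 4*B2 ≤ N) (hsol : SolvesMin alg N (4*B2) (4*B2))
    (h : Fin G → Fin B2 → Bool) (τv τv' : Fin G → Bool) (t0 : ℕ) (ht0 : t0 < G)
    (hag : ∀ u, u < t0 → tF G τv u = tF G τv' u)
    (hne : τv ⟨t0, ht0⟩ ≠ τv' ⟨t0, ht0⟩)
    (hsig : sigOf alg N (famX N B2 G h τv) = sigOf alg N (famX N B2 G h τv'))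
    (hbad : ¬ GOODx alg N B2 G h τv t0) : False := by
  classical
  obtain ⟨st_eq, tot_eq⟩ := sig_decode alg N B2 G h τv τv' hsol hsig
  have hpre : (famX N B2 G h τv).take (Dcut B2 t0)
      = (famX N B2 G h τv').take (Dcut B2 t0) := by
    rw [famX, famX, Dcut]
    exact famL_take_eq N B2 G (aF B2 G h) (tF G τv) (tF G τv') t0 hB2 hag
  rw [GOODx] at hbad
  push_neg at hbad
  obtain ⟨i, hi1, hi2, q, j, hq, hj, hidx⟩ := hbad
  set d := decX alg N B2 G h τv t0 with hd
  set d' := decX alg N B2 G h τv' t0 with hd'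
  have hd'2 : d' = dec (fsOf alg) alg.init ((famX N B2 G h τv).take (Dcut B2 t0))
      ((famX N B2 G h τv').drop (Dcut B2 t0)) := by
    rw [hd', decX, hpre]
  have hsvec : d.map (fun e => e.1) = d'.map (fun e => e.1) := by
    rw [hd, decX_map_s, hd', decX_map_s, st_eq]
  have hA : d.map (fun e => e.2.1) = d'.map (fun e => e.2.1) := by
    rw [hd'2] at hsvec ⊢
    rw [hd, decX] at hsvec ⊢
    exact dec_A_eq _ _ _ _ _ _ hsvec
  have hAB : d.map (fun e => e.2.1.length + e.2.2.2.length)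
      = d'.map (fun e => e.2.1.length + e.2.2.2.length) := by
    rw [hd, ← totals_eq_dec, hd', ← totals_eq_dec]
    exact tot_eq
  have hAlen : d.map (fun e => e.2.1.length) = d'.map (fun e => e.2.1.length) := by
    have h2 := congrArg (List.map List.length) hA
    simpa [List.map_map, Function.comp_def] using h2
  have hBlen := map_add_cancel _ _ _ _ d d' hAlen hAB
  have hprof : (segsOf d).map List.length = (segsOf d').map List.length := by
    rw [segsOf_map_length, segsOf_map_length]
    exact flatMap_pair_eq _ _ _ _ d d' hAlen hBlen
  have hdlen : d.length = p := by rw [hd]; exact decX_len alg N B2 G h τv t0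
  have hd'len : d'.length = p := by rw [hd']; exact decX_len alg N B2 G h τv' t0
  have hq' : q < d'.length := by omega
  have hAq : d[q].2.1 = d'[q].2.1 := map_entry_eq _ _ d d' hA q hq hq'
  have hk : 2*q < (segsOf d).length := by rw [segsOf_length]; omega
  have hk' : 2*q < (segsOf d').length := by rw [segsOf_length]; omega
  have hseg : (segsOf d)[2*q] = d[q].2.1 := by
    have e := segsOf_even d q hq
    rw [getElem?_eq_some_getElem _ _ hk] at e
    exact Option.some.inj e
  have hseg' : (segsOf d')[2*q] = d'[q].2.1 := by
    have e := segsOf_even d' q hq'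
    rw [getElem?_eq_some_getElem _ _ hk'] at e
    exact Option.some.inj e
  have hox : (alg.output (famX N B2 G h τv))[6*B2*t0 + i]? = d[q].2.1[j]? := by
    rw [out_seg alg N B2 G h τv t0, ← hd, hidx]
    rw [flatten_getElem?_seg (segsOf d) (2*q) j hk (by rw [hseg]; exact hj), hseg]
  have hidx' : 6*B2*t0 + i = offs (segsOf d') (2*q) + j := by
    rw [← offs_congr _ _ hprof]; exact hidx
  have hj' : j < d'[q].2.1.length := by rw [← hAq]; exact hj
  have hox' : (alg.output (famX N B2 G h τv'))[6*B2*t0 + i]? = d'[q].2.1[j]? := by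
    rw [out_seg alg N B2 G h τv' t0, ← hd', hidx']
    rw [flatten_getElem?_seg (segsOf d') (2*q) j hk' (by rw [hseg']; exact hj'), hseg']
  have hvx := out_val alg N B2 G h τv hsol hB2 hNlay t0 i ht0 hi1 hi2
  have hvx' := out_val alg N B2 G h τv' hsol hB2 hNlay t0 i ht0 hi1 hi2
  rw [hvx] at hox
  rw [hvx'] at hox'
  rw [hAq] at hox
  have e1 := Option.some.inj (hox.trans hox'.symm)
  have he : (1:ℕ) ≤ (if aF B2 G h t0 (i - B2) then 2 else 1)
      ∧ (if aF B2 G h t0 (i - B2) then 2 else 1) ≤ 2 := by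
    constructor <;> (split <;> omega)
  cases hb : τv ⟨t0, ht0⟩ <;> cases hb' : τv' ⟨t0, ht0⟩ <;> rw [hb, hb'] at e1 <;>
    simp only [Bool.false_eq_true, if_false, if_true] at e1
  · exact hne (hb.trans hb'.symm)
  · omega
  · omega
  · exact hne (hb.trans hb'.symm)

end SWM
namespace SWM

lemma sigC_decode {Q : Type} {p : ℕ} (alg : StreamAlg Q p ℕ ℕ) (N B2 G : ℕ)
    (h h' : Fin G → Fin B2 → Bool) (τv : Fin G → Bool) (t : ℕ)
    (hsol : SolvesMin alg N (4*B2) (4*B2))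
    (hsig : sigCOf alg N B2 G h τv t = sigCOf alg N B2 G h' τv t) :
    (decX alg N B2 G h τv t).map (fun e => e.2.2.1)
        = (decX alg N B2 G h' τv t).map (fun e => e.2.2.1)
      ∧ (runsFrom (fsOf alg) alg.init (famX N B2 G h τv)).2.map List.length
        = (runsFrom (fsOf alg) alg.init (famX N B2 G h' τv)).2.map List.length := by
  obtain ⟨h1, h2⟩ := Prod.mk.injEq .. ▸ hsig
  constructor
  · apply list_eq_of_getD alg.init p
    · rw [List.length_map]; exact decX_len alg N B2 G h τv t
    · rw [List.length_map]; exact decX_len alg N B2 G h' τv t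
    · intro q; exact congrFun h1 q
  · apply list_eq_of_getD 0 p _ _ (totV_len_p alg _) (totV_len_p alg _)
    intro q
    have e := congrFun h2 q
    have e' := congrArg Fin.val e
    simp only at e'
    have b1 : ((runsFrom (fsOf alg) alg.init (famX N B2 G h τv)).2.map
        List.length).getD q 0 ≤ N+1 := by
      have hq : (q : ℕ) < ((runsFrom (fsOf alg) alg.init (famX N B2 G h τv)).2.map
          List.length).length := by rw [totV_len_p]; exact q.2
      rw [List.getD_eq_getElem _ _ hq]
      exact totals_le alg N B2 G h τv hsol _ (List.getElem_mem _)
    have b2 : ((runsFrom (fsOf alg) alg.init (famX N B2 G h' τv)).2.map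
        List.length).getD q 0 ≤ N+1 := by
      have hq : (q : ℕ) < ((runsFrom (fsOf alg) alg.init (famX N B2 G h' τv)).2.map
          List.length).length := by rw [totV_len_p]; exact q.2
      rw [List.getD_eq_getElem _ _ hq]
      exact totals_le alg N B2 G h' τv hsol _ (List.getElem_mem _)
    omega

lemma good_inj {Q : Type} {p : ℕ} (alg : StreamAlg Q p ℕ ℕ) (N B2 G : ℕ)
    (hB2 : 0 < B2) (hNlay : 6*B2*G + 4*B2 ≤ N)
    (hsol : SolvesMin alg N (4*B2) (4*B2)) (t0 : Fin G) (τv : Fin G → Bool)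
    (hτ : τv t0 = false) (h1 h2 : Fin G → Fin B2 → Bool)
    (hg1 : GOODx alg N B2 G h1 τv (t0 : ℕ)) (hg2 : GOODx alg N B2 G h2 τv (t0 : ℕ))
    (hsigc : sigCOf alg N B2 G h1 τv (t0 : ℕ) = sigCOf alg N B2 G h2 τv (t0 : ℕ))
    (hrest : ∀ u, u ≠ t0 → h1 u = h2 u) : h1 = h2 := by
  classical
  obtain ⟨cv_eq, tot_eq⟩ := sigC_decode alg N B2 G h1 h2 τv (t0 : ℕ) hsol hsigc
  have hsuf : (famX N B2 G h1 τv).drop (Dcut B2 (t0 : ℕ))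
      = (famX N B2 G h2 τv).drop (Dcut B2 (t0 : ℕ)) := by
    rw [famX, famX, Dcut]
    apply famL_drop_eq N B2 G (aF B2 G h1) (aF B2 G h2) (tF G τv) (t0 : ℕ) hB2
    intro u s hu
    unfold aF
    by_cases hug : u < G
    · rw [dif_pos hug, dif_pos hug]
      by_cases hsb : s < B2
      · rw [dif_pos hsb, dif_pos hsb,
          hrest ⟨u, hug⟩ (fun hh => hu (congrArg Fin.val hh))]
      · rw [dif_neg hsb, dif_neg hsb]
    · rw [dif_neg hug, dif_neg hug]
  set d := decX alg N B2 G h1 τv (t0 : ℕ) with hd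
  set d' := decX alg N B2 G h2 τv (t0 : ℕ) with hd'
  have hd'2 : d' = dec (fsOf alg) alg.init ((famX N B2 G h2 τv).take (Dcut B2 (t0 : ℕ)))
      ((famX N B2 G h1 τv).drop (Dcut B2 (t0 : ℕ))) := by
    rw [hd', decX, hsuf]
  have hB : d.map (fun e => e.2.2.2) = d'.map (fun e => e.2.2.2) := by
    rw [hd'2]
    rw [hd, decX]
    apply dec_B_eq
    rw [← decX, ← hd]
    rw [show dec (fsOf alg) alg.init ((famX N B2 G h2 τv).take (Dcut B2 (t0:ℕ)))
        ((famX N B2 G h1 τv).drop (Dcut B2 (t0:ℕ))) = d' from hd'2.symm]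
    exact cv_eq
  have hAB : d.map (fun e => e.2.1.length + e.2.2.2.length)
      = d'.map (fun e => e.2.1.length + e.2.2.2.length) := by
    rw [hd, ← totals_eq_dec, hd', ← totals_eq_dec]
    exact tot_eq
  have hBlen : d.map (fun e => e.2.2.2.length) = d'.map (fun e => e.2.2.2.length) := by
    have h3 := congrArg (List.map List.length) hB
    simpa [List.map_map, Function.comp_def] using h3
  have hBA : d.map (fun e => e.2.2.2.length + e.2.1.length)
      = d'.map (fun e => e.2.2.2.length + e.2.1.length) := by
    simp only [Nat.add_comm]
    exact hAB
  have hAlen := map_add_cancel _ _ _ _ d d' hBlen hBA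
  have hprof : (segsOf d).map List.length = (segsOf d').map List.length := by
    rw [segsOf_map_length, segsOf_map_length]
    exact flatMap_pair_eq _ _ _ _ d d' hAlen hBlen
  have hdlen : d.length = p := by rw [hd]; exact decX_len alg N B2 G h1 τv _
  have hd'len : d'.length = p := by rw [hd']; exact decX_len alg N B2 G h2 τv _
  have hmul : 6*B2*((t0:ℕ)+1) ≤ 6*B2*G := Nat.mul_le_mul_left _ (by omega)
  have hmul2 : 6*B2*((t0:ℕ)+1) = 6*B2*(t0:ℕ) + 6*B2 := by ring
  -- main: equality of the slot bits at tooth t0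
  have hslot : ∀ s : Fin B2, h1 t0 s = h2 t0 s := by
    intro s
    set i := B2 + (s : ℕ) with hi
    have hi1 : B2 ≤ i := by omega
    have hi2 : i < 2*B2 := by have := s.2; omega
    -- find the covering segment for output index g* in run h1
    have hglt : 6*B2*(t0:ℕ) + i < (segsOf d).flatten.length := by
      have hfl : (segsOf d).flatten = alg.output (famX N B2 G h1 τv) := by
        rw [out_seg alg N B2 G h1 τv (t0 : ℕ), hd]
      rw [hfl, out_len alg N B2 G h1 τv hsol]
      omega
    obtain ⟨k, j, hk, hj, hidx⟩ := flatten_cover (segsOf d) _ hglt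
    rcases Nat.even_or_odd k with ⟨q, hq2⟩ | ⟨q, hq2⟩
    · -- even segment: contradicts GOODx
      exfalso
      have hkq : k = 2*q := by omega
      subst hkq
      have hq : q < d.length := by
        have := segsOf_length d; omega
      have hseg : (segsOf d)[2*q]'hk = d[q].2.1 := by
        have e := segsOf_even d q hq
        rw [getElem?_eq_some_getElem _ _ hk] at e
        exact Option.some.inj e
      exact hg1 i hi1 hi2 ⟨q, j, hq,
        (show j < d[q].2.1.length by rw [← hseg]; exact hj), hidx⟩
    · -- odd segment: value determined by the checkpoint data, equal for h1, h2
      have hkq : k = 2*q + 1 := by omega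
      subst hkq
      have hq : q < d.length := by
        have := segsOf_length d; omega
      have hq' : q < d'.length := by omega
      have hk' : 2*q+1 < (segsOf d').length := by
        have := segsOf_length d'; omega
      have hBq : d[q].2.2.2 = d'[q].2.2.2 := map_entry_eq _ _ d d' hB q hq hq'
      have hseg : (segsOf d)[2*q+1]'hk = d[q].2.2.2 := by
        have e := segsOf_odd d q hq
        rw [getElem?_eq_some_getElem _ _ hk] at e
        exact Option.some.inj e
      have hseg' : (segsOf d')[2*q+1]'hk' = d'[q].2.2.2 := by
        have e := segsOf_odd d' q hq'
        rw [getElem?_eq_some_getElem _ _ hk'] at e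
        exact Option.some.inj e
      have hox : (alg.output (famX N B2 G h1 τv))[6*B2*(t0:ℕ) + i]? = d[q].2.2.2[j]? := by
        rw [out_seg alg N B2 G h1 τv (t0 : ℕ), ← hd, hidx]
        rw [flatten_getElem?_seg (segsOf d) (2*q+1) j hk hj, hseg]
      have hox' : (alg.output (famX N B2 G h2 τv))[6*B2*(t0:ℕ) + i]? = d'[q].2.2.2[j]? := by
        have hidx' : 6*B2*(t0:ℕ) + i = offs (segsOf d') (2*q+1) + j := by
          rw [← offs_congr _ _ hprof]; exact hidx
        have hj' : j < d'[q].2.2.2.length := by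
          rw [← hBq, ← hseg]; exact hj
        rw [out_seg alg N B2 G h2 τv (t0 : ℕ), ← hd', hidx']
        rw [flatten_getElem?_seg (segsOf d') (2*q+1) j hk' (by rw [hseg']; exact hj'),
          hseg']
      have hvx := out_val alg N B2 G h1 τv hsol hB2 hNlay (t0:ℕ) i t0.2 hi1 hi2
      have hvx' := out_val alg N B2 G h2 τv hsol hB2 hNlay (t0:ℕ) i t0.2 hi1 hi2
      rw [hvx] at hox
      rw [hvx'] at hox'
      rw [hBq] at hox
      have e1 := Option.some.inj (hox.trans hox'.symm)
      have ht0eta : (⟨(t0:ℕ), t0.2⟩ : Fin G) = t0 := by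
        apply Fin.ext; rfl
      rw [ht0eta, hτ] at e1
      simp only [Bool.false_eq_true, if_false] at e1
      have hsub : (i : ℕ) - B2 = (s : ℕ) := by omega
      have ha1 : aF B2 G h1 (t0:ℕ) (i - B2) = h1 t0 s := by
        rw [hsub]; unfold aF; rw [dif_pos t0.2, dif_pos s.2]
      have ha2 : aF B2 G h2 (t0:ℕ) (i - B2) = h2 t0 s := by
        rw [hsub]; unfold aF; rw [dif_pos t0.2, dif_pos s.2]
      rw [ha1, ha2] at e1
      cases hb1 : h1 t0 s <;> cases hb2 : h2 t0 s
      · rfl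
      · rw [hb1, hb2] at e1
        simp only [Bool.false_eq_true, if_false, if_true] at e1
        omega
      · rw [hb1, hb2] at e1
        simp only [Bool.false_eq_true, if_false, if_true] at e1
        omega
      · rfl
  -- conclude
  funext u s
  by_cases hu : u = t0
  · subst hu; exact hslot s
  · exact congrFun (hrest u hu) s

end SWM
namespace SWM

lemma good_card {Q : Type} {p : ℕ} [Fintype Q] (alg : StreamAlg Q p ℕ ℕ) (N B2 G : ℕ)
    (hB2 : 0 < B2) (hNlay : 6*B2*G + 4*B2 ≤ N)
    (hsol : SolvesMin alg N (4*B2) (4*B2)) (t0 : Fin G) (τv : Fin G → Bool)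
    (hτ : τv t0 = false) (s : Finset (Fin G → Fin B2 → Bool))
    (hs : ∀ h ∈ s, GOODx alg N B2 G h τv (t0 : ℕ)) :
    s.card ≤ Fintype.card ((Fin p → Q) × (Fin p → Fin (N+2))) * 2^(B2*(G-1)) := by
  classical
  have hcount : s.card ≤ Fintype.card (((Fin p → Q) × (Fin p → Fin (N+2))) ×
      {g : Fin G → Fin B2 → Bool // g t0 = fun _ => false}) := by
    rw [← Finset.card_univ]
    apply Finset.card_le_card_of_injOn
      (fun h => (sigCOf alg N B2 G h τv (t0 : ℕ),
        ⟨Function.update h t0 (fun _ => false), Function.update_self _ _ _⟩))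
    · intro a _; exact Finset.mem_univ _
    · intro a ha b hb heq
      have h1 : sigCOf alg N B2 G a τv (t0:ℕ) = sigCOf alg N B2 G b τv (t0:ℕ) :=
        congrArg Prod.fst heq
      have h2 : Function.update a t0 (fun _ => false)
          = Function.update b t0 (fun _ => false) :=
        congrArg (fun z => (Prod.snd z).1) heq
      have hrest : ∀ u, u ≠ t0 → a u = b u := by
        intro u hu
        calc a u = Function.update a t0 (fun _ => false) u :=
              (Function.update_of_ne hu _ _).symm
          _ = Function.update b t0 (fun _ => false) u := by rw [h2]
          _ = b u := Function.update_of_ne hu _ _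
      exact good_inj alg N B2 G hB2 hNlay hsol t0 τv hτ a b (hs a ha) (hs b hb) h1 hrest
  rw [Fintype.card_prod] at hcount
  have hG : 0 < G := t0.pos
  have hc1 : Fintype.card (Fin B2 → Bool) = 2^B2 := by simp
  have hsplit := card_split (t := t0) (c := (fun _ => false : Fin B2 → Bool))
  rw [hc1] at hsplit
  have h45 : B2*(G-1) + B2 = B2*G := by
    have h9 : G - 1 + 1 = G := Nat.succ_pred_eq_of_pos hG
    calc B2*(G-1) + B2 = B2*((G-1)+1) := (Nat.mul_succ _ _).symm
      _ = B2*G := by rw [h9]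
  have hc2 : Fintype.card (Fin G → Fin B2 → Bool) = 2^(B2*G) := by
    rw [pow_mul]
    simp [hc1]
  rw [hc2] at hsplit
  have hpows : 2^(B2*G) = 2^(B2*(G-1)) * 2^B2 := by
    rw [← pow_add, h45]
  rw [hpows] at hsplit
  have hT : Fintype.card {g : Fin G → Fin B2 → Bool // g t0 = fun _ => false}
      = 2^(B2*(G-1)) :=
    Nat.eq_of_mul_eq_mul_right (by positivity) hsplit
  rw [hT] at hcount
  exact hcount

lemma exists_good_h {Q : Type} {p : ℕ} [Fintype Q] (alg : StreamAlg Q p ℕ ℕ)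
    (N B2 G : ℕ) (hB2 : 0 < B2) (hNlay : 6*B2*G + 4*B2 ≤ N) (hG : 0 < G)
    (hsol : SolvesMin alg N (4*B2) (4*B2))
    (hbound : G * 2^G * Fintype.card ((Fin p → Q) × (Fin p → Fin (N+2))) < 2^B2) :
    ∃ hh : Fin G → Fin B2 → Bool, ∀ t0 : Fin G, ∀ τv : Fin G → Bool, τv t0 = false →
      ¬ GOODx alg N B2 G hh τv (t0 : ℕ) := by
  classical
  by_contra hno
  push_neg at hno
  set W := Fintype.card ((Fin p → Q) × (Fin p → Fin (N+2))) with hW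
  set F := fun pr : Fin G × (Fin G → Bool) =>
    Finset.univ.filter (fun hh : Fin G → Fin B2 → Bool =>
      pr.2 pr.1 = false ∧ GOODx alg N B2 G hh pr.2 (pr.1 : ℕ)) with hF
  have hsub : (Finset.univ : Finset (Fin G → Fin B2 → Bool)) ⊆
      (Finset.univ : Finset (Fin G × (Fin G → Bool))).biUnion F := by
    intro hh _
    obtain ⟨t0, τv, hf, hg⟩ := hno hh
    exact Finset.mem_biUnion.2 ⟨(t0, τv), Finset.mem_univ _,
      Finset.mem_filter.2 ⟨Finset.mem_univ _, hf, hg⟩⟩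
  have hper : ∀ pr : Fin G × (Fin G → Bool), (F pr).card ≤ W * 2^(B2*(G-1)) := by
    intro pr
    by_cases hpf : pr.2 pr.1 = false
    · apply good_card alg N B2 G hB2 hNlay hsol pr.1 pr.2 hpf
      intro hh hmem
      exact (Finset.mem_filter.1 hmem).2.2
    · have : F pr = ∅ := by
        rw [hF]
        apply Finset.filter_eq_empty_iff.2
        intro hh _
        intro hc
        exact hpf hc.1
      rw [this]
      simp
  have hchain : Fintype.card (Fin G → Fin B2 → Bool)
      ≤ (G * 2^G) * (W * 2^(B2*(G-1))) := by
    have h1 := Finset.card_le_card hsub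
    have h2 := Finset.card_biUnion_le (s := (Finset.univ : Finset (Fin G × (Fin G → Bool))))
      (t := F)
    have h3 : (Finset.univ : Finset (Fin G × (Fin G → Bool))).sum (fun pr => (F pr).card)
        ≤ (G * 2^G) * (W * 2^(B2*(G-1))) := by
      calc (Finset.univ : Finset (Fin G × (Fin G → Bool))).sum (fun pr => (F pr).card)
          ≤ (Finset.univ : Finset (Fin G × (Fin G → Bool))).card • (W * 2^(B2*(G-1))) :=
            Finset.sum_le_card_nsmul _ _ _ (fun pr _ => hper pr)
        _ = (G * 2^G) * (W * 2^(B2*(G-1))) := by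
            simp [Finset.card_univ, smul_eq_mul]
    calc Fintype.card (Fin G → Fin B2 → Bool)
        = (Finset.univ : Finset (Fin G → Fin B2 → Bool)).card := (Finset.card_univ).symm
      _ ≤ _ := le_trans h1 (le_trans h2 h3)
  have hc2 : Fintype.card (Fin G → Fin B2 → Bool) = 2^(B2*(G-1)) * 2^B2 := by
    have h4 : B2*(G-1) + B2 = B2*G := by
      have h9 : G - 1 + 1 = G := Nat.succ_pred_eq_of_pos hG
      calc B2*(G-1) + B2 = B2*((G-1)+1) := (Nat.mul_succ _ _).symm
        _ = B2*G := by rw [h9]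
    calc Fintype.card (Fin G → Fin B2 → Bool) = 2^(B2*G) := by
          rw [pow_mul]; simp
      _ = 2^(B2*(G-1)) * 2^B2 := by rw [← pow_add, h4]
  rw [hc2] at hchain
  have hstrict : (G * 2^G) * (W * 2^(B2*(G-1))) < 2^(B2*(G-1)) * 2^B2 := by
    have hpos : 0 < 2^(B2*(G-1)) := by positivity
    calc (G * 2^G) * (W * 2^(B2*(G-1))) = (G * 2^G * W) * 2^(B2*(G-1)) := by ring
      _ < 2^B2 * 2^(B2*(G-1)) := by
          exact (Nat.mul_lt_mul_right hpos).2 hbound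
      _ = 2^(B2*(G-1)) * 2^B2 := by ring
  omega

end SWM

/-- For every constant number of passes `p`, there is an `ε > 0` so that for all
sufficiently large `N` and every space bound `M ≤ ε·√N` there is a window length
`K` for which no `p`-pass streaming algorithm with at most `2^M` states solves
sliding-window minimum with maximum value `R = K`. -/
theorem stmt_16 (p : ℕ) (hp : 1 ≤ p) :
    ∃ ε : ℝ, 0 < ε ∧
      ∃ N₀ : ℕ, ∀ N : ℕ, N₀ ≤ N → ∀ M : ℕ, (M : ℝ) ≤ ε * Real.sqrt N →
        ∃ K : ℕ, 1 ≤ K ∧ K ≤ N ∧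
          ∀ (Q : Type) (_ : Fintype Q) (alg : StreamAlg Q p ℕ ℕ),
            Fintype.card Q ≤ 2 ^ M → ¬ SolvesMin alg N K K := by
  classical
  obtain ⟨N1, hN1⟩ := SWM.exists_N0 (480*p^2)
  have hp0 : (0:ℝ) < (p:ℝ) := by exact_mod_cast hp
  refine ⟨1/(22*(p:ℝ)), by positivity, N1, fun N hN M hM => ?_⟩
  set Lz := Nat.size (N+2) with hLz
  set G := p*M + p*Lz + 1 with hGdef
  set B2 := 3*G with hB2def
  have hLz1 : 1 ≤ Lz := by
    rw [hLz]
    exact Nat.size_pos.2 (by omega)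
  have hpLz : 1 ≤ p * Lz := Nat.mul_pos (by omega) (by omega)
  have hG1 : 1 ≤ G := by omega
  have hB2pos : 0 < B2 := by omega
  -- the square bound on M
  have hM2 : 484*(p^2*M^2) ≤ N := by
    have hs : Real.sqrt N * Real.sqrt N = (N:ℝ) := Real.mul_self_sqrt (by positivity)
    have hM' : (M:ℝ) * (M:ℝ)
        ≤ (1/(22*(p:ℝ)) * Real.sqrt N) * (1/(22*(p:ℝ)) * Real.sqrt N) :=
      mul_self_le_mul_self (by positivity) hM
    have h2 : (1/(22*(p:ℝ)) * Real.sqrt N) * (1/(22*(p:ℝ)) * Real.sqrt N)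
        = (N:ℝ)/(484*(p:ℝ)^2) := by
      rw [show (1/(22*(p:ℝ)) * Real.sqrt N) * (1/(22*(p:ℝ)) * Real.sqrt N)
        = (Real.sqrt N * Real.sqrt N) * (1/(484*(p:ℝ)^2)) from by ring]
      rw [hs]
      ring
    rw [h2] at hM'
    have h3 : (484:ℝ)*(p:ℝ)^2*((M:ℝ)*(M:ℝ)) ≤ (N:ℝ) := by
      have hp2 : (0:ℝ) < 484*(p:ℝ)^2 := by positivity
      rw [div_eq_mul_inv] at hM'
      calc (484:ℝ)*(p:ℝ)^2*((M:ℝ)*(M:ℝ))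
          ≤ 484*(p:ℝ)^2*((N:ℝ) * (484*(p:ℝ)^2)⁻¹) :=
            mul_le_mul_of_nonneg_left hM' (le_of_lt hp2)
        _ = (N:ℝ) := by field_simp
    have h4 : ((484*(p^2*M^2) : ℕ) : ℝ) ≤ ((N : ℕ) : ℝ) := by
      push_cast
      nlinarith [h3]
    exact_mod_cast h4
  have hLN : 480*(p^2*Lz^2) ≤ N := by
    have h := hN1 N hN
    have he : 480*p^2*(Nat.size (N+2))^2 = 480*(p^2*Lz^2) := by rw [← hLz]; ring
    omega
  clear_value Lz G B2
  -- layout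
  have hGb : G ≤ 2*(p*M) + 2*(p*Lz) := by omega
  have hlay : 6*B2*G + 4*B2 ≤ N := by
    have e0 : 6*B2*G + 4*B2 = 18*(G*G) + 12*G := by rw [hB2def]; ring
    have e05 : G ≤ G*G := Nat.le_mul_of_pos_left G (by omega)
    have e1 : 6*B2*G + 4*B2 ≤ 30*(G*G) := by omega
    have e2 : G*G ≤ (2*(p*M) + 2*(p*Lz))*(2*(p*M) + 2*(p*Lz)) := Nat.mul_le_mul hGb hGb
    have hab : 2*(p*M)*(p*Lz) ≤ (p*M)^2 + (p*Lz)^2 := two_mul_le_add_sq _ _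
    have e3 : (2*(p*M) + 2*(p*Lz))*(2*(p*M) + 2*(p*Lz)) ≤ 8*(p^2*M^2) + 8*(p^2*Lz^2) := by
      have hA : (p*M)^2 = p^2*M^2 := by ring
      have hB : (p*Lz)^2 = p^2*Lz^2 := by ring
      nlinarith
    omega
  have hKN : 4*B2 ≤ N := by
    have : 0 ≤ 6*B2*G := Nat.zero_le _
    omega
  refine ⟨4*B2, by omega, hKN, ?_⟩
  intro Qt instQ alg hcard hsol
  -- bound on the signature space
  set W := Fintype.card ((Fin p → Qt) × (Fin p → Fin (N+2))) with hWdef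
  have hNL : N + 2 ≤ 2^Lz := by
    rw [hLz]
    exact le_of_lt (Nat.lt_size_self (N+2))
  have hWle : W ≤ 2^(p*M + p*Lz) := by
    have c1 : Fintype.card (Fin p → Qt) = Fintype.card Qt ^ p := by
      simp [Fintype.card_fun]
    have c2 : Fintype.card (Fin p → Fin (N+2)) = (N+2) ^ p := by
      simp [Fintype.card_fun]
    rw [hWdef, Fintype.card_prod, c1, c2]
    calc Fintype.card Qt ^ p * (N+2)^p ≤ (2^M)^p * (2^Lz)^p :=
        Nat.mul_le_mul (Nat.pow_le_pow_left hcard p) (Nat.pow_le_pow_left hNL p)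
      _ = 2^(p*M + p*Lz) := by
        rw [← pow_mul, ← pow_mul, ← pow_add]
        congr 1
        ring
  have hWlt : W ≤ 2^(G-1) := by
    have hG1' : G - 1 = p*M + p*Lz := by omega
    rw [hG1']
    exact hWle
  have hbound : G * 2^G * W < 2^B2 := by
    have h1 : G * 2^G * W ≤ 2^G * 2^G * 2^(G-1) :=
      Nat.mul_le_mul (Nat.mul_le_mul (le_of_lt (Nat.lt_two_pow_self (n := G))) le_rfl) hWlt
    have h2 : (2:ℕ)^(G + G + (G-1)) = 2^G * 2^G * 2^(G-1) := by
      rw [pow_add 2 (G+G) (G-1), pow_add 2 G G]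
    have h3 : G + G + (G-1) < B2 := by omega
    calc G * 2^G * W ≤ 2^(G+G+(G-1)) := by rw [h2]; exact h1
      _ < 2^B2 := Nat.pow_lt_pow_right (by omega) h3
  obtain ⟨hh, hhh⟩ := SWM.exists_good_h alg N B2 G hB2pos hlay (by omega) hsol hbound
  have hcard2 : Fintype.card ((Fin p → Qt) × (Fin p → Fin (N+2)))
      < Fintype.card (Fin G → Bool) := by
    have hcf : Fintype.card (Fin G → Bool) = 2^G := by simp
    rw [hcf, ← hWdef]
    calc W ≤ 2^(G-1) := hWlt
      _ < 2^G := Nat.pow_lt_pow_right (by omega) (by omega)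
  obtain ⟨τ1, τ2, hne12, hsig12⟩ := Fintype.exists_ne_map_eq_of_card_lt
    (fun τv : Fin G → Bool => SWM.sigOf alg N (SWM.famX N B2 G hh τv)) hcard2
  set sdf := Finset.univ.filter (fun t : Fin G => τ1 t ≠ τ2 t) with hsdf
  have hsne : sdf.Nonempty := by
    by_contra hemp
    rw [Finset.not_nonempty_iff_eq_empty] at hemp
    apply hne12
    funext t
    by_contra hnt
    have hmem : t ∈ sdf := Finset.mem_filter.2 ⟨Finset.mem_univ _, hnt⟩
    rw [hemp] at hmem
    exact absurd hmem (Finset.notMem_empty t)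
  set t0 := sdf.min' hsne with ht0
  have ht0mem : τ1 t0 ≠ τ2 t0 := by
    have h := sdf.min'_mem hsne
    exact (Finset.mem_filter.1 h).2
  have hagree : ∀ u : ℕ, u < (t0:ℕ) → SWM.tF G τ1 u = SWM.tF G τ2 u := by
    intro u hu
    have huG : u < G := Nat.lt_trans hu t0.2
    unfold SWM.tF
    rw [dif_pos huG, dif_pos huG]
    by_contra hne'
    have hmem : (⟨u, huG⟩ : Fin G) ∈ sdf :=
      Finset.mem_filter.2 ⟨Finset.mem_univ _, hne'⟩
    have hle := Finset.min'_le sdf _ hmem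
    rw [← ht0] at hle
    have : (t0:ℕ) ≤ u := hle
    omega
  have ht0G : (t0:ℕ) < G := t0.2
  have heta : (⟨(t0:ℕ), ht0G⟩ : Fin G) = t0 := by apply Fin.ext; rfl
  cases hb1 : τ1 t0 with
  | false =>
    exact SWM.case1_contra alg N B2 G hB2pos hlay hsol hh τ1 τ2 (t0:ℕ) ht0G hagree
      (by rw [heta]; exact ht0mem) hsig12 (hhh t0 τ1 hb1)
  | true =>
    have hb2 : τ2 t0 = false := by
      cases hb2' : τ2 t0
      · rfl
      · exact absurd (hb1.trans hb2'.symm) ht0mem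
    exact SWM.case1_contra alg N B2 G hB2pos hlay hsol hh τ2 τ1 (t0:ℕ) ht0G
      (fun u hu => (hagree u hu).symm)
      (by rw [heta, hb1, hb2]; simp) hsig12.symm (hhh t0 τ2 hb2)
end

section
/- For every constant number of passes p ≥ 1 there exists ε > 0 such that for all sufficiently large N the following holds: for every M ≤ ε·N there exists an odd window length K with 1 ≤ K ≤ N such that no p-pass streaming algorithm with state space Q of size |Q| ≤ 2^M solves the sliding-window majority problem with parameters (N, K). Consequently, no algorithm in the p-pass streaming model (with a single output pass) solves sliding-window majority on boolean streams in o(N) space uniformly over all window sizes K. -/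
/-- `majL L K i`: the majority bit of the window `L_i, …, L_{i+K-1}` (`K` odd). -/
def majL (L : List Bool) (K i : ℕ) : Bool :=
  decide (K < 2 * ((Finset.range K).filter
    (fun t => L.getD (i + t) false = true)).card)

/-- The algorithm solves the sliding-window majority problem with parameters
`(N, K)` on boolean streams. -/
def SolvesMaj {Q : Type} {p : ℕ} (alg : StreamAlg Q p Bool Bool) (N K : ℕ) : Prop :=
  ∀ L : List Bool, L.length = N →
    alg.output L = List.ofFn (fun i : Fin (N - K + 1) => majL L K i)

namespace SWM

theorem runPass_append_s17 {Q I O : Type} (f : Q → I → Q × List O) (q : Q) (a b : List I) :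
    runPass f q (a ++ b) =
      ((runPass f (runPass f q a).1 b).1,
        (runPass f q a).2 ++ (runPass f (runPass f q a).1 b).2) := by
  induction a generalizing q with
  | nil => simp [runPass]
  | cons x xs ih => simp [runPass, ih, List.append_assoc]

variable {Q : Type} {p : ℕ}

/-- per-pass trace of a run on input `a ++ b`: for each pass, the pair
(state+output after the `a`-segment, state+output after the `b`-segment). -/
def runTr (alg : StreamAlg Q p Bool Bool) (a b : List Bool) :
    List (Fin p) → Q → List ((Q × List Bool) × (Q × List Bool))
  | [], _ => []
  | r :: rs, q =>
    let ra := runPass (alg.step r) q a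
    let rb := runPass (alg.step r) ra.1 b
    (ra, rb) :: runTr alg a b rs rb.1

theorem runTr_length (alg : StreamAlg Q p Bool Bool) (a b : List Bool)
    (rs : List (Fin p)) (q : Q) : (runTr alg a b rs q).length = rs.length := by
  induction rs generalizing q with
  | nil => rfl
  | cons r rs ih => simp [runTr, ih]

theorem foldl_snd (alg : StreamAlg Q p Bool Bool) (a b : List Bool) :
    ∀ (rs : List (Fin p)) (q : Q) (os : List (List Bool)),
      (rs.foldl (fun acc r =>
        let res := runPass (alg.step r) acc.1 (a ++ b)
        (res.1, acc.2 ++ [res.2])) (q, os)).2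
      = os ++ List.map (fun e => e.1.2 ++ e.2.2) (runTr alg a b rs q) := by
  intro rs
  induction rs with
  | nil => intro q os; simp [runTr]
  | cons r rs ih =>
    intro q os
    simp only [List.foldl_cons]
    rw [ih]
    simp [runTr, runPass_append_s17]

theorem output_eq_s17 (alg : StreamAlg Q p Bool Bool) (a b : List Bool) :
    alg.output (a ++ b)
      = (List.map (fun e => e.1.2 ++ e.2.2)
          (runTr alg a b (List.finRange p) alg.init)).flatten := by
  unfold StreamAlg.output StreamAlg.passOutputs
  rw [foldl_snd]
  simp

/-- transcript entry: crossing state, #outputs on the `a` side, state at end of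
pass, #outputs on the `b` side. -/
def tr {Q : Type} : ((Q × List Bool) × (Q × List Bool)) → Q × ℕ × Q × ℕ :=
  fun e => (e.1.1, e.1.2.length, e.2.1, e.2.2.length)

theorem mix (alg : StreamAlg Q p Bool Bool) (a b a' b' : List Bool) :
    ∀ (rs : List (Fin p)) (q : Q),
      List.map tr (runTr alg a b rs q) = List.map tr (runTr alg a' b' rs q) →
      List.map (fun e => (e.1.2, e.2.2)) (runTr alg a b' rs q)
        = List.zipWith (fun e e' => (e.1.2, e'.2.2))
            (runTr alg a b rs q) (runTr alg a' b' rs q) := by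
  intro rs
  induction rs with
  | nil => intro q _; simp [runTr]
  | cons r rs ih =>
    intro q h
    simp only [runTr, List.map_cons, List.cons.injEq, tr, Prod.mk.injEq] at h
    obtain ⟨⟨h1, -, h3, -⟩, htail⟩ := h
    rw [h3] at htail
    simp only [runTr, List.map_cons, List.zipWith_cons_cons]
    rw [h3, h1]
    congr 1
    exact ih _ htail

end SWM

namespace SWM

theorem getD_ofFn {α : Type} {m : ℕ} (f : Fin m → α) (d : α) (i : ℕ) (h : i < m) :
    (List.ofFn f).getD i d = f ⟨i, h⟩ := by
  rw [List.getD_eq_getElem _ _ (by simpa using h)]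
  simp

theorem getD_append_split {α : Type} (l l' : List α) (d : α) (i : ℕ) :
    (l ++ l').getD i d = if h : i < l.length then l.getD i d else l'.getD (i - l.length) d := by
  split
  · exact List.getD_append _ _ _ _ ‹_›
  · exact List.getD_append_right _ _ _ _ (by omega)

theorem own {α : Type} (d : α) :
    ∀ (A B A' B' : List (List α)),
      A.map List.length = A'.map List.length →
      B.map List.length = B'.map List.length →
      ∀ i : ℕ,
        (((List.zipWith (· ++ ·) A B).flatten.getD i d
            = (List.zipWith (· ++ ·) A B').flatten.getD i d ∧
          (List.zipWith (· ++ ·) A' B).flatten.getD i d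
            = (List.zipWith (· ++ ·) A' B').flatten.getD i d) ∨
         ((List.zipWith (· ++ ·) A B).flatten.getD i d
            = (List.zipWith (· ++ ·) A' B).flatten.getD i d ∧
          (List.zipWith (· ++ ·) A B').flatten.getD i d
            = (List.zipWith (· ++ ·) A' B').flatten.getD i d)) := by
  intro A
  induction A with
  | nil =>
    intro B A' B' hA hB i
    have : A' = [] := by simpa using (List.map_eq_nil_iff.mp hA.symm)
    subst this
    simp
  | cons a A ihA =>
    intro B A' B' hA hB i
    match A', hA with
    | a' :: A', hA =>
      simp only [List.map_cons, List.cons.injEq] at hA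
      obtain ⟨ha, hA⟩ := hA
      match B, B', hB with
      | [], B', hB =>
        have : B' = [] := by simpa using (List.map_eq_nil_iff.mp hB.symm)
        subst this; simp
      | b :: B, [], hB => simp at hB
      | b :: B, b' :: B', hB =>
        simp only [List.map_cons, List.cons.injEq] at hB
        obtain ⟨hb, hB⟩ := hB
        simp only [List.zipWith_cons_cons, List.flatten_cons]
        by_cases h1 : i < a.length
        · left
          constructor
          · rw [getD_append_split (a ++ b), getD_append_split (a ++ b'),
              dif_pos (by simp; omega), dif_pos (by simp; omega),
              getD_append_split a b, getD_append_split a b',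
              dif_pos h1, dif_pos h1]
          · rw [getD_append_split (a' ++ b), getD_append_split (a' ++ b'),
              dif_pos (by simp; omega), dif_pos (by simp; omega),
              getD_append_split a' b, getD_append_split a' b',
              dif_pos (by omega), dif_pos (by omega)]
        · by_cases h2 : i < a.length + b.length
          · right
            constructor
            · rw [getD_append_split (a ++ b), getD_append_split (a' ++ b),
                dif_pos (by simp; omega), dif_pos (by simp; omega),
                getD_append_split a b, getD_append_split a' b,
                dif_neg (by omega), dif_neg (by omega), ha]
            · rw [getD_append_split (a ++ b'), getD_append_split (a' ++ b'),
                dif_pos (by simp; omega), dif_pos (by simp; omega),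
                getD_append_split a b', getD_append_split a' b',
                dif_neg (by omega), dif_neg (by omega), ha]
          · have e1 : (a ++ b).length = a.length + b.length := by simp
            have e2 : (a ++ b').length = a.length + b.length := by simp; omega
            have e3 : (a' ++ b).length = a.length + b.length := by simp; omega
            have e4 : (a' ++ b').length = a.length + b.length := by simp; omega
            rw [getD_append_split (a ++ b), getD_append_split (a ++ b'),
              getD_append_split (a' ++ b), getD_append_split (a' ++ b'),
              dif_neg (by omega), dif_neg (by omega), dif_neg (by omega),
              dif_neg (by omega), e1, e2, e3, e4]
            exact ihA B A' B' hA hB (i - (a.length + b.length))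

end SWM

namespace SWM

def abit (n : ℕ) (v : Fin n → Bool) (i : ℕ) : Bool :=
  if h : i / 2 < n then (if i % 2 = 0 then v ⟨i / 2, h⟩ else !v ⟨i / 2, h⟩) else false

def bbit (n : ℕ) (w : Fin n → Bool) (i : ℕ) : Bool :=
  if i = 0 then false
  else if h : (i - 1) / 2 < n then
    (if (i - 1) % 2 = 0 then !w ⟨(i - 1) / 2, h⟩ else w ⟨(i - 1) / 2, h⟩)
  else false

def aSeg (n : ℕ) (v : Fin n → Bool) : List Bool :=
  List.ofFn (fun i : Fin (2 * n) => abit n v i)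

def bSeg (n m : ℕ) (w : Fin n → Bool) : List Bool :=
  List.ofFn (fun i : Fin m => bbit n w i)

def stream (n N : ℕ) (v w : Fin n → Bool) : List Bool :=
  aSeg n v ++ bSeg n (N - 2 * n) w

theorem stream_length {n N : ℕ} (h : 2 * n ≤ N) (v w : Fin n → Bool) :
    (stream n N v w).length = N := by
  simp [stream, aSeg, bSeg]; omega

theorem abit_even {n : ℕ} (v : Fin n → Bool) {s : ℕ} (h : s < n) :
    abit n v (2 * s) = v ⟨s, h⟩ := by
  have h1 : 2 * s / 2 = s := by omega
  have h2 : 2 * s % 2 = 0 := by omega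
  simp [abit, h1, h2, h]

theorem abit_odd {n : ℕ} (v : Fin n → Bool) {s : ℕ} (h : s < n) :
    abit n v (2 * s + 1) = !v ⟨s, h⟩ := by
  have h1 : (2 * s + 1) / 2 = s := by omega
  have h2 : (2 * s + 1) % 2 = 1 := by omega
  simp [abit, h1, h2, h]

theorem bbit_zero {n : ℕ} (w : Fin n → Bool) : bbit n w 0 = false := by simp [bbit]

theorem bbit_odd {n : ℕ} (w : Fin n → Bool) {s : ℕ} (h : s < n) :
    bbit n w (2 * s + 1) = !w ⟨s, h⟩ := by
  have h1 : (2 * s + 1 - 1) / 2 = s := by omega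
  have h2 : (2 * s + 1 - 1) % 2 = 0 := by omega
  simp [bbit, h1, h2, h]

theorem bbit_even {n : ℕ} (w : Fin n → Bool) {s : ℕ} (h : s < n) :
    bbit n w (2 * s + 2) = w ⟨s, h⟩ := by
  have h1 : (2 * s + 1) / 2 = s := by omega
  have h2 : (2 * s + 1) % 2 = 1 := by omega
  simp [bbit, h1, h2, h]

theorem bbit_large {n : ℕ} (w : Fin n → Bool) {i : ℕ} (h : 2 * n + 1 ≤ i) :
    bbit n w i = false := by
  have h1 : ¬ ((i - 1) / 2 < n) := by omega
  have h2 : i ≠ 0 := by omega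
  simp [bbit, h1, h2]

theorem stream_getD {n N : ℕ} (hN : 4 * n + 1 ≤ N) (v w : Fin n → Bool) (pos : ℕ) :
    (stream n N v w).getD pos false
      = if pos < 2 * n then abit n v pos else bbit n w (pos - 2 * n) := by
  rw [stream, getD_append_split]
  have la : (aSeg n v).length = 2 * n := by simp [aSeg]
  rw [la]
  split
  · exact getD_ofFn _ _ _ (by omega)
  · rcases lt_or_ge (pos - 2 * n) (N - 2 * n) with h | h
    · exact getD_ofFn _ _ _ h
    · rw [List.getD_eq_default _ _ (by simp [bSeg]; omega)]
      exact (bbit_large w (by omega)).symm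

theorem sum_pair (g : ℕ → ℕ) : ∀ m : ℕ,
    ∑ i ∈ Finset.range (2 * m), g i = ∑ s ∈ Finset.range m, (g (2 * s) + g (2 * s + 1)) := by
  intro m
  induction m with
  | zero => simp
  | succ m ih =>
    have : 2 * (m + 1) = (2 * m + 1) + 1 := by ring
    rw [this, Finset.sum_range_succ, Finset.sum_range_succ, Finset.sum_range_succ, ih]
    omega

theorem window_count {n N : ℕ} (hn : 1 ≤ n) (hN : 4 * n + 1 ≤ N)
    (v w : Fin n → Bool) (t : ℕ) (ht : t < n) :
    ((Finset.range (2 * n + 1)).filter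
        (fun t' => (stream n N v w).getD (2 * t + 1 + t') false = true)).card
      = (if v ⟨t, ht⟩ then 0 else 1) + (if w ⟨t, ht⟩ then 0 else 1) + (n - 1) := by
  classical
  set g : ℕ → ℕ := fun pos => if (stream n N v w).getD pos false = true then 1 else 0 with hg
  have hval : ∀ pos : ℕ, g pos
      = (if (if pos < 2 * n then abit n v pos else bbit n w (pos - 2 * n)) = true then 1 else 0) := by
    intro pos; rw [hg]; simp only [stream_getD hN]
  have hvA : ∀ pos : ℕ, pos < 2 * n → g pos = (if abit n v pos = true then 1 else 0) := by
    intro pos h; rw [hval, if_pos h]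
  have hvB : ∀ pos : ℕ, ¬ pos < 2 * n →
      g pos = (if bbit n w (pos - 2 * n) = true then 1 else 0) := by
    intro pos h; rw [hval, if_neg h]
  have hcard : ((Finset.range (2 * n + 1)).filter
        (fun t' => (stream n N v w).getD (2 * t + 1 + t') false = true)).card
      = ∑ t' ∈ Finset.range (2 * n + 1), g (2 * t + 1 + t') := by
    rw [Finset.card_filter]
  rw [hcard]
  have hrange : Finset.range (2 * n + 1) = Finset.Ico 0 (2 * n + 1) := by
    rw [Finset.range_eq_Ico]
  rw [hrange]
  set f : ℕ → ℕ := fun t' => g (2 * t + 1 + t') with hf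
  -- cut points 0, 1, 2n-2t-1, 2n-2t, 2n, 2n+1
  rw [← Finset.sum_Ico_consecutive f (by omega : (0:ℕ) ≤ 2 * n) (by omega : 2 * n ≤ 2 * n + 1)]
  rw [← Finset.sum_Ico_consecutive f (by omega : (0:ℕ) ≤ 2 * n - 2 * t) (by omega : 2 * n - 2 * t ≤ 2 * n)]
  rw [← Finset.sum_Ico_consecutive f (by omega : (0:ℕ) ≤ 2 * n - 2 * t - 1) (by omega : 2 * n - 2 * t - 1 ≤ 2 * n - 2 * t)]
  rw [← Finset.sum_Ico_consecutive f (by omega : (0:ℕ) ≤ 1) (by omega : 1 ≤ 2 * n - 2 * t - 1)]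
  -- segment S1 : {0}
  have S1 : ∑ i ∈ Finset.Ico 0 1, f i = (if v ⟨t, ht⟩ then 0 else 1) := by
    have : (2 : ℕ) * t + 1 + 0 = 2 * t + 1 := by ring
    simp only [hf]
    rw [Finset.sum_Ico_eq_sum_range]
    simp only [Nat.sub_zero, Finset.sum_range_one, Nat.add_zero]
    rw [hvA _ (by omega), show 2 * t + 1 = 2 * t + 1 from rfl, abit_odd v ht]
    cases v ⟨t, ht⟩ <;> simp
  -- segment S2 : a-pairs
  have S2 : ∑ i ∈ Finset.Ico 1 (2 * n - 2 * t - 1), f i = n - t - 1 := by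
    rw [Finset.sum_Ico_eq_sum_range]
    have hlen : 2 * n - 2 * t - 1 - 1 = 2 * (n - t - 1) := by omega
    rw [hlen, sum_pair]
    have : ∀ s ∈ Finset.range (n - t - 1),
        (f (1 + 2 * s) + f (1 + (2 * s + 1))) = 1 := by
      intro s hs
      simp only [Finset.mem_range] at hs
      simp only [hf]
      have e1 : 2 * t + 1 + (1 + 2 * s) = 2 * (t + 1 + s) := by ring
      have e2 : 2 * t + 1 + (1 + (2 * s + 1)) = 2 * (t + 1 + s) + 1 := by ring
      have hts : t + 1 + s < n := by omega
      rw [e1, e2, hvA _ (by omega), hvA _ (by omega), abit_even v hts, abit_odd v hts]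
      cases v ⟨t + 1 + s, hts⟩ <;> simp
    rw [Finset.sum_congr rfl this]
    simp
  -- segment S3 : the single zero
  have S3 : ∑ i ∈ Finset.Ico (2 * n - 2 * t - 1) (2 * n - 2 * t), f i = 0 := by
    rw [Finset.sum_Ico_eq_sum_range]
    have : 2 * n - 2 * t - (2 * n - 2 * t - 1) = 1 := by omega
    rw [this]
    simp only [Finset.sum_range_one, hf]
    have e : 2 * t + 1 + (2 * n - 2 * t - 1 + 0) = 2 * n := by omega
    rw [e, hvB _ (by omega)]
    have h0 : 2 * n - 2 * n = 0 := by omega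
    rw [h0, bbit_zero]
    simp
  -- segment S4 : b-pairs
  have S4 : ∑ i ∈ Finset.Ico (2 * n - 2 * t) (2 * n), f i = t := by
    rw [Finset.sum_Ico_eq_sum_range]
    have hlen : 2 * n - (2 * n - 2 * t) = 2 * t := by omega
    rw [hlen, sum_pair]
    have : ∀ s ∈ Finset.range t,
        (f (2 * n - 2 * t + 2 * s) + f (2 * n - 2 * t + (2 * s + 1))) = 1 := by
      intro s hs
      simp only [Finset.mem_range] at hs
      simp only [hf]
      have e1 : 2 * t + 1 + (2 * n - 2 * t + 2 * s) = 2 * n + (2 * s + 1) := by omega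
      have e2 : 2 * t + 1 + (2 * n - 2 * t + (2 * s + 1)) = 2 * n + (2 * s + 2) := by omega
      have e3 : 2 * n + (2 * s + 1) - 2 * n = 2 * s + 1 := by omega
      have e4 : 2 * n + (2 * s + 2) - 2 * n = 2 * s + 2 := by omega
      have hsn : s < n := by omega
      rw [e1, e2, hvB _ (by omega), hvB _ (by omega), e3, e4, bbit_odd w hsn, bbit_even w hsn]
      cases w ⟨s, hsn⟩ <;> simp
    rw [Finset.sum_congr rfl this]
    simp
  -- segment S5 : {2n}
  have S5 : ∑ i ∈ Finset.Ico (2 * n) (2 * n + 1), f i = (if w ⟨t, ht⟩ then 0 else 1) := by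
    rw [Finset.sum_Ico_eq_sum_range]
    have : 2 * n + 1 - 2 * n = 1 := by omega
    rw [this]
    simp only [Finset.sum_range_one, hf]
    have e : 2 * t + 1 + (2 * n + 0) = 2 * n + (2 * t + 1) := by ring
    have e2 : 2 * n + (2 * t + 1) - 2 * n = 2 * t + 1 := by omega
    rw [e, hvB _ (by omega), e2, bbit_odd w ht]
    cases w ⟨t, ht⟩ <;> simp
  rw [S1, S2, S3, S4, S5]
  omega

theorem maj_val {n N : ℕ} (hn : 1 ≤ n) (hN : 4 * n + 1 ≤ N)
    (v w : Fin n → Bool) (t : ℕ) (ht : t < n) :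
    majL (stream n N v w) (2 * n + 1) (2 * t + 1) = (!v ⟨t, ht⟩ && !w ⟨t, ht⟩) := by
  rw [majL, window_count hn hN v w t ht]
  cases hv : v ⟨t, ht⟩ <;> cases hw : w ⟨t, ht⟩ <;> simp <;> omega

end SWM

namespace SWM

theorem sq_le_two_pow : ∀ x : ℕ, 4 ≤ x → x * x ≤ 2 ^ x := by
  intro x
  induction x with
  | zero => omega
  | succ x ih =>
    intro h
    rcases Nat.lt_or_ge x 4 with h4 | h4
    · revert h; interval_cases x <;> norm_num
    · have hih := ih h4
      have h4x : 4 * x ≤ x * x := Nat.mul_le_mul_right x h4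
      have : (x + 1) * (x + 1) = x * x + (2 * x + 1) := by ring
      have hp : 2 ^ (x + 1) = 2 ^ x + 2 ^ x := by ring
      omega

theorem numeric {p N M : ℕ} (hp : 1 ≤ p) (hN : 2 ^ (64 * p + 64) ≤ N)
    (hM : 32 * p * M ≤ N) :
    2 ^ (2 * M * p) * (N + 1) ^ (2 * p) < 2 ^ (N / 8) := by
  set x := Nat.log 2 (N + 1) with hxdef
  have hNpos : N + 1 ≠ 0 := by omega
  have hxlarge : 64 * p + 64 ≤ x := by
    rw [hxdef, Nat.le_log_iff_pow_le (by norm_num) hNpos]; omega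
  have hpow : 2 ^ x ≤ N + 1 := Nat.pow_log_le_self 2 hNpos
  have hup : N + 1 ≤ 2 ^ (x + 1) := le_of_lt (Nat.lt_pow_succ_log_self (by norm_num) _)
  have hsq : x * x ≤ 2 ^ x := sq_le_two_pow x (by omega)
  set y := p * (x + 1) with hy
  have hkey : 32 * y + 17 ≤ 2 ^ x := by
    have h1 : (64 * p + 64) * x ≤ x * x := Nat.mul_le_mul_right x hxlarge
    have h2 : (64 * p + 64) * x = 64 * (p * x) + 64 * x := by ring
    have h3 : y = p * x + p := by rw [hy]; ring
    have h4 : p ≤ p * x := Nat.le_mul_of_pos_right p (by omega)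
    omega
  have hNbig : 32 * y + 16 ≤ N := by omega
  have hMp : 2 * M * p ≤ N / 16 := by
    have h5 : (2 * M * p) * 16 ≤ N := by
      calc (2 * M * p) * 16 = 32 * p * M := by ring
        _ ≤ N := hM
    exact (Nat.le_div_iff_mul_le (by norm_num)).mpr h5
  have hxN : 2 * y < N / 16 := by
    have h6 : (2 * y + 1) * 16 ≤ N := by omega
    have := (Nat.le_div_iff_mul_le (by norm_num : (0:ℕ) < 16)).mpr h6
    omega
  have hexp : 2 * M * p + (x + 1) * (2 * p) < N / 8 := by
    have h7 : (x + 1) * (2 * p) = 2 * y := by rw [hy]; ring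
    have h8 : 2 * (N / 16) ≤ N / 8 := by omega
    omega
  calc 2 ^ (2 * M * p) * (N + 1) ^ (2 * p)
      ≤ 2 ^ (2 * M * p) * (2 ^ (x + 1)) ^ (2 * p) := by
        exact Nat.mul_le_mul_left _ (Nat.pow_le_pow_left hup _)
    _ = 2 ^ (2 * M * p + (x + 1) * (2 * p)) := by
        rw [← pow_mul, ← pow_add]
    _ < 2 ^ (N / 8) := Nat.pow_lt_pow_right (by norm_num) hexp

end SWM

namespace SWM

/-- The per-pass trace of the algorithm on the hard-instance stream. -/
def Tfun {Q : Type} {p : ℕ} (alg : StreamAlg Q p Bool Bool) (n N : ℕ)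
    (x : Fin n → Bool) : List ((Q × List Bool) × (Q × List Bool)) :=
  runTr alg (aSeg n x) (bSeg n (N - 2 * n) x) (List.finRange p) alg.init

theorem main_contradiction {Q : Type} {p n N : ℕ} [Fintype Q]
    (alg : StreamAlg Q p Bool Bool)
    (hn1 : 1 ≤ n) (hN4 : 4 * n + 1 ≤ N)
    (hsolve : SolvesMaj alg N (2 * n + 1))
    (hlt : Fintype.card (Fin p → Q × Fin (N + 1) × Q × Fin (N + 1))
            < Fintype.card (Fin n → Bool)) : False := by
  classical
  have h2n : 2 * n ≤ N := by omega
  set d0 : (Q × List Bool) × (Q × List Bool) :=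
    ((alg.init, ([] : List Bool)), (alg.init, ([] : List Bool))) with hd0
  -- output on mixed streams
  have houtput : ∀ v w : Fin n → Bool,
      alg.output (stream n N v w)
        = (List.map (fun e => e.1.2 ++ e.2.2)
            (runTr alg (aSeg n v) (bSeg n (N - 2 * n) w) (List.finRange p) alg.init)).flatten :=
    fun v w => output_eq_s17 alg _ _
  -- correct output values
  have hval : ∀ (v w : Fin n → Bool) (t : Fin n),
      (alg.output (stream n N v w)).getD (2 * (t : ℕ) + 1) false = (!v t && !w t) := by
    intro v w t
    rw [hsolve _ (stream_length h2n v w)]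
    rw [getD_ofFn _ _ _ (show 2 * (t : ℕ) + 1 < N - (2 * n + 1) + 1 by
      have := t.isLt; omega)]
    have := maj_val hn1 hN4 v w t t.isLt
    simpa using this
  -- chunk lengths are bounded
  have hbound : ∀ (x : Fin n → Bool) (r : ℕ),
      ((Tfun alg n N x).getD r d0).1.2.length < N + 1 ∧
      ((Tfun alg n N x).getD r d0).2.2.length < N + 1 := by
    intro x r
    rcases Nat.lt_or_ge r (Tfun alg n N x).length with h | h
    · rw [List.getD_eq_getElem _ _ h]
      have hmem : (Tfun alg n N x)[r] ∈ Tfun alg n N x := List.getElem_mem h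
      have hmem2 := List.mem_map_of_mem (f := fun e => e.1.2 ++ e.2.2) hmem
      have hmem3 := List.mem_map_of_mem (f := List.length) hmem2
      have hle := List.single_le_sum (fun (y : ℕ) _ => Nat.zero_le y) _ hmem3
      rw [← List.length_flatten] at hle
      have hlen : (List.map (fun e => e.1.2 ++ e.2.2) (Tfun alg n N x)).flatten.length
          = N - (2 * n + 1) + 1 := by
        rw [Tfun, ← houtput x x, hsolve _ (stream_length h2n x x), List.length_ofFn]
      rw [hlen] at hle
      simp only [List.length_append] at hle
      omega
    · rw [List.getD_eq_default _ _ h, hd0]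
      simp
  -- pigeonhole
  obtain ⟨x, x', hne, hphi⟩ := Fintype.exists_ne_map_eq_of_card_lt
    (fun (x : Fin n → Bool) (r : Fin p) =>
      (((Tfun alg n N x).getD r d0).1.1,
       (⟨((Tfun alg n N x).getD r d0).1.2.length, (hbound x r).1⟩ : Fin (N + 1)),
       ((Tfun alg n N x).getD r d0).2.1,
       (⟨((Tfun alg n N x).getD r d0).2.2.length, (hbound x r).2⟩ : Fin (N + 1)))) hlt
  obtain ⟨t, hxt⟩ := Function.ne_iff.mp hne
  -- transcript equality
  have hTlen : ∀ z : Fin n → Bool, (Tfun alg n N z).length = p := by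
    intro z
    rw [Tfun, runTr_length]
    simp
  have htr : List.map tr (Tfun alg n N x) = List.map tr (Tfun alg n N x') := by
    apply List.ext_getElem (by rw [List.length_map, List.length_map, hTlen, hTlen])
    intro r h1 h2
    have hrp : r < p := by rw [List.length_map, hTlen] at h1; exact h1
    have h := congrFun hphi ⟨r, hrp⟩
    simp only [Prod.mk.injEq, Fin.mk.injEq] at h
    rw [List.getD_eq_getElem _ _ (by rw [hTlen]; exact hrp),
        List.getD_eq_getElem _ _ (by rw [hTlen]; exact hrp)] at h
    obtain ⟨e1, e2, e3, e4⟩ := h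
    simp only [List.getElem_map, tr]
    rw [e1, e2, e3, e4]
  -- the four chunk lists
  set A := List.map (fun e => e.1.2) (Tfun alg n N x) with hA
  set B := List.map (fun e => e.2.2) (Tfun alg n N x) with hB
  set A' := List.map (fun e => e.1.2) (Tfun alg n N x') with hA'
  set B' := List.map (fun e => e.2.2) (Tfun alg n N x') with hB'
  have hmix1 := mix alg (aSeg n x) (bSeg n (N - 2 * n) x)
      (aSeg n x') (bSeg n (N - 2 * n) x') (List.finRange p) alg.init htr
  have hmix2 := mix alg (aSeg n x') (bSeg n (N - 2 * n) x')
      (aSeg n x) (bSeg n (N - 2 * n) x) (List.finRange p) alg.init htr.symm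
  -- glue decompositions
  have glue_eq : ∀ (l : List ((Q × List Bool) × (Q × List Bool))),
      List.map (fun e => e.1.2 ++ e.2.2) l
        = List.map (fun c : List Bool × List Bool => c.1 ++ c.2)
            (List.map (fun e => (e.1.2, e.2.2)) l) := by
    intro l; rw [List.map_map]; rfl
  have hO1 : alg.output (stream n N x x) = (List.zipWith (· ++ ·) A B).flatten := by
    rw [houtput, hA, hB, List.zipWith_map, List.zipWith_self]; rfl
  have hO4 : alg.output (stream n N x' x') = (List.zipWith (· ++ ·) A' B').flatten := by
    rw [houtput, hA', hB', List.zipWith_map, List.zipWith_self]; rfl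
  have hO2 : alg.output (stream n N x x') = (List.zipWith (· ++ ·) A B').flatten := by
    rw [houtput, glue_eq, hmix1, List.map_zipWith, hA, hB', List.zipWith_map]; rfl
  have hO3 : alg.output (stream n N x' x) = (List.zipWith (· ++ ·) A' B).flatten := by
    rw [houtput, glue_eq, hmix2, List.map_zipWith, hA', hB, List.zipWith_map]; rfl
  -- length hypotheses for ownership
  have hlA : A.map List.length = A'.map List.length := by
    have := congrArg (List.map (fun z : Q × ℕ × Q × ℕ => z.2.1)) htr
    rw [List.map_map, List.map_map] at this
    rw [hA, hA', List.map_map, List.map_map]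
    exact this
  have hlB : B.map List.length = B'.map List.length := by
    have := congrArg (List.map (fun z : Q × ℕ × Q × ℕ => z.2.2.2)) htr
    rw [List.map_map, List.map_map] at this
    rw [hB, hB', List.map_map, List.map_map]
    exact this
  -- ownership
  have hown := own false A B A' B' hlA hlB (2 * (t : ℕ) + 1)
  rw [← hO1, ← hO2, ← hO3, ← hO4] at hown
  rw [hval x x t, hval x x' t, hval x' x t, hval x' x' t] at hown
  rcases hown with ⟨h1, h2⟩ | ⟨h1, h2⟩ <;>
    · revert hxt h1 h2
      cases x t <;> cases x' t <;> simp

end SWM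


/-- For every constant number of passes `p`, there is an `ε > 0` so that for all
sufficiently large `N` and every space bound `M ≤ ε·N` there is an odd window
length `K` for which no `p`-pass streaming algorithm with at most `2^M` states
solves sliding-window majority on boolean streams. -/
theorem stmt_17 (p : ℕ) (hp : 1 ≤ p) :
    ∃ ε : ℝ, 0 < ε ∧
      ∃ N₀ : ℕ, ∀ N : ℕ, N₀ ≤ N → ∀ M : ℕ, (M : ℝ) ≤ ε * N →
        ∃ K : ℕ, Odd K ∧ 1 ≤ K ∧ K ≤ N ∧
          ∀ (Q : Type) (_ : Fintype Q) (alg : StreamAlg Q p Bool Bool),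
            Fintype.card Q ≤ 2 ^ M → ¬ SolvesMaj alg N K := by

  have hppos : (0 : ℝ) < 32 * p := by
    have : (1 : ℝ) ≤ p := by exact_mod_cast hp
    linarith
  refine ⟨1 / (32 * p), by positivity, 2 ^ (64 * p + 64) + 8, ?_⟩
  intro N hN M hM
  have hpow1 : 1 ≤ 2 ^ (64 * p + 64) := Nat.one_le_two_pow
  set n := N / 8 with hn
  have hn1 : 1 ≤ n := by omega
  have hN4 : 4 * n + 1 ≤ N := by omega
  have hMN : 32 * p * M ≤ N := by
    have h1 : ((32 * p * M : ℕ) : ℝ) ≤ (N : ℝ) := by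
      push_cast
      calc (32 : ℝ) * p * M ≤ 32 * p * (1 / (32 * p) * N) := by
            exact mul_le_mul_of_nonneg_left hM (by positivity)
        _ = N := by field_simp
    exact_mod_cast h1
  refine ⟨2 * n + 1, ⟨n, by ring⟩, by omega, by omega, ?_⟩
  intro Q instQ alg hcard hsolve
  apply SWM.main_contradiction alg hn1 hN4 hsolve
  -- cardinality bound
  have hc1 : Fintype.card (Fin n → Bool) = 2 ^ n := by
    simp [Fintype.card_fun]
  have hc2 : Fintype.card (Fin p → Q × Fin (N + 1) × Q × Fin (N + 1))
      = (Fintype.card Q * ((N + 1) * (Fintype.card Q * (N + 1)))) ^ p := by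
    simp [Fintype.card_fun]
  rw [hc1, hc2]
  calc (Fintype.card Q * ((N + 1) * (Fintype.card Q * (N + 1)))) ^ p
      ≤ (2 ^ M * ((N + 1) * (2 ^ M * (N + 1)))) ^ p := by
        apply Nat.pow_le_pow_left
        exact Nat.mul_le_mul hcard (Nat.mul_le_mul_left _ (Nat.mul_le_mul_right _ hcard))
    _ = 2 ^ (2 * M * p) * (N + 1) ^ (2 * p) := by
        have e1 : 2 ^ M * ((N + 1) * (2 ^ M * (N + 1))) = (2 ^ M) ^ 2 * (N + 1) ^ 2 := by ring
        rw [e1, mul_pow, ← pow_mul, ← pow_mul, ← pow_mul]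
        ring_nf
    _ < 2 ^ (N / 8) := SWM.numeric hp (by omega) hMN
end
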